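/- arXiv:0907.3262 — 7 statements merged into one kernel-verified Lean document; each statement's English description precedes it below -/
import Mathlib

section
/- Let a > 3/2 and let (q°_k)_{k≥1} be a sequence of nonnegative real numbers such that k^a · q°_k → 1 as k → ∞. Set c = 4/(4·f∘(1/4) + f∘'(1/4)) and β = f∘'(1/4)/(4·f∘(1/4) + f∘'(1/4)), and define q_k = c·(β/4)^{k−1}·q°_k for every k ≥ 1 and f_q(x) = ∑_{k≥1} N(k)·q_k·x^{k−1}. Then: (i) β ∈ (0,1); (ii) the radius of convergence of the power series f_q equals 1/β; (iii) f_q(1/β) = 1 − β; (iv) f_q'(1/β) = β²; and (v) x = 1/β is the unique real number x ≥ 1 such that the series defining f_q(x) converges and f_q(x) = 1 − 1/x. -/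
/-!
Write `p k = N (k + 1) q°_{k+1}`. The central binomial bounds `4^k ≤ (k + 1) N (k + 1)` and
`N (k + 1)² (k + 1) ≤ 4 · 16^k` put `p k 4^{-k}` between constant multiples of `k^{-1-a}` and
`k^{-1/2-a}`, so `∑ (k + 1) p k 4^{-k}` converges (`a > 3/2`) while `p k 4^{-k}` decays only
polynomially.
The coefficients of `f_q` are `c (β/4)^k p k`, so `f_q(x) = c f∘(βx/4)`: its radius of convergence
is `1/β`, and `f_q(1/β) = c A = 1 - β`, `f_q'(1/β) = c β B / 4 = β²`. Thus the convex function
`f_q` is tangent at `1/β` to the concave function `1 - 1/x`; the tangent-line inequality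
`f_q(y) - f_q(x) ≤ f_q'(y) (y - x)` excludes any other solution below `1/β`, and the series
diverges above it.
-/

open Filter Topology

namespace Nat

theorem centralBinom_sq_mul_succ_le (n : ℕ) : n.centralBinom ^ 2 * (n + 1) ≤ 16 ^ n := by
  induction n with
  | zero => simp
  | succ n ih =>
    have hrec := succ_mul_centralBinom_succ n
    have hpoly : (2 * n + 1) ^ 2 * (n + 2) ≤ 4 * (n + 1) ^ 3 := by ring_nf; omega
    refine Nat.le_of_mul_le_mul_right ?_ (pow_pos n.succ_pos 3)
    calc (n + 1).centralBinom ^ 2 * (n + 1 + 1) * (n + 1) ^ 3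
        = 4 * ((2 * n + 1) ^ 2 * (n + 2)) * (n.centralBinom ^ 2 * (n + 1)) := by
          rw [show (n + 1).centralBinom ^ 2 * (n + 1 + 1) * (n + 1) ^ 3
              = ((n + 1) * (n + 1).centralBinom) ^ 2 * ((n + 2) * (n + 1)) by ring, hrec]
          ring
      _ ≤ 4 * (4 * (n + 1) ^ 3) * 16 ^ n := by gcongr
      _ = 16 ^ (n + 1) * (n + 1) ^ 3 := by ring

theorem centralBinom_succ_eq_two_mul_choose (k : ℕ) :
    (k + 1).centralBinom = 2 * (2 * k + 1).choose k := by
  rw [centralBinom_eq_two_mul_choose, show 2 * (k + 1) = 2 * k + 1 + 1 by ring,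
    choose_succ_succ, choose_symm_half]
  ring

theorem four_pow_le_succ_mul_choose (k : ℕ) : 4 ^ k ≤ (k + 1) * (2 * k + 1).choose k := by
  have h := four_pow_le_two_mul_self_mul_centralBinom (k + 1) k.succ_pos
  rw [centralBinom_succ_eq_two_mul_choose, pow_succ] at h
  nlinarith

theorem choose_two_mul_add_one_sq_mul_succ_le (k : ℕ) :
    (2 * k + 1).choose k ^ 2 * (k + 1) ≤ 4 * 16 ^ k := by
  have h := centralBinom_sq_mul_succ_le (k + 1)
  rw [centralBinom_succ_eq_two_mul_choose] at h
  have h' : 4 * ((2 * k + 1).choose k ^ 2 * (k + 2)) ≤ 4 * (4 * 16 ^ k) := by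
    convert h using 1 <;> ring
  calc (2 * k + 1).choose k ^ 2 * (k + 1) ≤ (2 * k + 1).choose k ^ 2 * (k + 2) := by gcongr; omega
    _ ≤ 4 * 16 ^ k := Nat.le_of_mul_le_mul_left h' (by norm_num)

end Nat

theorem succ_mul_choose_mul_quarter_pow_le (k : ℕ) :
    ((k : ℝ) + 1) * ((2 * k + 1).choose k * (1 / 4 : ℝ) ^ k) ≤ 2 * ((k : ℝ) + 1) ^ (1 / 2 : ℝ) := by
  set u : ℝ := (2 * k + 1).choose k * (1 / 4 : ℝ) ^ k
  have hu : u ^ 2 * ((k : ℝ) + 1) ≤ 4 := by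
    have h : (((2 * k + 1).choose k ^ 2 * (k + 1) : ℕ) : ℝ) ≤ ((4 * 16 ^ k : ℕ) : ℝ) :=
      mod_cast Nat.choose_two_mul_add_one_sq_mul_succ_le k
    have key : u ^ 2 * ((k : ℝ) + 1)
        = ((2 * k + 1).choose k ^ 2 * (k + 1) : ℕ) * (1 / 16 : ℝ) ^ k := by
      simp only [u]; push_cast; rw [show (1 / 16 : ℝ) = (1 / 4) ^ 2 by norm_num, ← pow_mul]; ring
    calc u ^ 2 * ((k : ℝ) + 1) ≤ ((4 * 16 ^ k : ℕ) : ℝ) * (1 / 16 : ℝ) ^ k := by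
          rw [key]; gcongr
      _ = 4 := by push_cast; rw [mul_assoc, ← mul_pow]; norm_num
  have hk : (0 : ℝ) ≤ (k : ℝ) + 1 := by positivity
  rw [← Real.sqrt_eq_rpow, ← pow_le_pow_iff_left₀ (by positivity) (by positivity) two_ne_zero,
    mul_pow ((k : ℝ) + 1), mul_pow 2, Real.sq_sqrt hk]
  nlinarith

theorem one_le_succ_mul_choose_mul_quarter_pow (k : ℕ) :
    1 ≤ ((k : ℝ) + 1) * ((2 * k + 1).choose k * (1 / 4 : ℝ) ^ k) := by
  have h : ((4 ^ k : ℕ) : ℝ) ≤ (((k + 1) * (2 * k + 1).choose k : ℕ) : ℝ) :=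
    mod_cast Nat.four_pow_le_succ_mul_choose k
  calc (1 : ℝ) = ((4 ^ k : ℕ) : ℝ) * (1 / 4 : ℝ) ^ k := by push_cast; rw [← mul_pow]; norm_num
    _ ≤ (((k + 1) * (2 * k + 1).choose k : ℕ) : ℝ) * (1 / 4 : ℝ) ^ k := by gcongr
    _ = _ := by push_cast; ring

section CentralBinomialWeights

variable {a : ℝ} {w : ℕ → ℝ}

theorem summable_succ_mul_choose_mul_quarter_pow (ha : 3 / 2 < a) (hw0 : ∀ k, 0 ≤ w k)
    (hw : Tendsto (fun k : ℕ => ((k : ℝ) + 1) ^ a * w k) atTop (𝓝 1)) :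
    Summable fun k : ℕ => ((k : ℝ) + 1) * ((2 * k + 1).choose k * w k) * (1 / 4 : ℝ) ^ k := by
  have hsum : Summable fun k : ℕ => 4 * ((k : ℝ) + 1) ^ (1 / 2 - a) := by
    refine Summable.mul_left 4 ?_
    have := (summable_nat_add_iff 1).mpr (Real.summable_nat_rpow.mpr (by linarith : 1 / 2 - a < -1))
    simpa only [Nat.cast_add, Nat.cast_one] using this
  refine hsum.of_norm_bounded_eventually_nat ?_
  filter_upwards [hw.eventually (eventually_le_nhds one_lt_two)] with k hk
  have hk0 : (0 : ℝ) < (k : ℝ) + 1 := by positivity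
  rw [Real.norm_of_nonneg (by have := hw0 k; positivity)]
  calc ((k : ℝ) + 1) * ((2 * k + 1).choose k * w k) * (1 / 4 : ℝ) ^ k
      = ((k : ℝ) + 1) * ((2 * k + 1).choose k * (1 / 4 : ℝ) ^ k) * w k := by ring
    _ ≤ 2 * ((k : ℝ) + 1) ^ (1 / 2 : ℝ) * w k :=
        mul_le_mul_of_nonneg_right (succ_mul_choose_mul_quarter_pow_le k) (hw0 k)
    _ = 2 * (((k : ℝ) + 1) ^ (1 / 2 - a) * ((k : ℝ) + 1) ^ a) * w k := by
        rw [← Real.rpow_add hk0, sub_add_cancel]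
    _ = 2 * ((k : ℝ) + 1) ^ (1 / 2 - a) * (((k : ℝ) + 1) ^ a * w k) := by ring
    _ ≤ 2 * ((k : ℝ) + 1) ^ (1 / 2 - a) * 2 := by gcongr
    _ = 4 * ((k : ℝ) + 1) ^ (1 / 2 - a) := by ring

theorem eventually_le_rpow_mul_choose_mul_quarter_pow
    (hw : Tendsto (fun k : ℕ => ((k : ℝ) + 1) ^ a * w k) atTop (𝓝 1)) :
    ∀ᶠ k : ℕ in atTop,
      1 / 2 ≤ ((k : ℝ) + 1) ^ (a + 1) * ((2 * k + 1).choose k * w k * (1 / 4 : ℝ) ^ k) := by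
  filter_upwards [hw.eventually (eventually_ge_nhds one_half_lt_one)] with k hk
  have hk0 : (k : ℝ) + 1 ≠ 0 := by positivity
  calc (1 / 2 : ℝ) ≤ ((k : ℝ) + 1) ^ a * w k * 1 := by rw [mul_one]; exact hk
    _ ≤ ((k : ℝ) + 1) ^ a * w k * (((k : ℝ) + 1) * ((2 * k + 1).choose k * (1 / 4 : ℝ) ^ k)) :=
        mul_le_mul_of_nonneg_left (one_le_succ_mul_choose_mul_quarter_pow k) (by linarith)
    _ = _ := by rw [Real.rpow_add_one hk0]; ring

end CentralBinomialWeights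

section NonnegPowerSeries

variable {b : ℕ → ℝ}

theorem summable_mul_pow_of_abs_le {x y : ℝ} (hb : ∀ k, 0 ≤ b k)
    (hy : Summable fun k => b k * y ^ k) (hx : |x| ≤ y) : Summable fun k => b k * x ^ k :=
  hy.of_norm_bounded fun k => by
    rw [norm_mul, norm_pow, Real.norm_of_nonneg (hb k), Real.norm_eq_abs]
    exact mul_le_mul_of_nonneg_left (pow_le_pow_left₀ (abs_nonneg x) hx k) (hb k)

theorem summable_mul_pow_of_summable_succ_mul {y : ℝ} (hb : ∀ k, 0 ≤ b k) (hy : 0 ≤ y)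
    (h : Summable fun k : ℕ => ((k : ℝ) + 1) * b k * y ^ k) : Summable fun k => b k * y ^ k :=
  h.of_nonneg_of_le (fun k => by have := hb k; positivity) fun k => by
    rw [mul_assoc]
    exact le_mul_of_one_le_left (by have := hb k; positivity) (by simp)

theorem natCast_mul_pow_pred_mul (k : ℕ) (y : ℝ) : (k : ℝ) * y ^ (k - 1) * y = k * y ^ k := by
  cases k with
  | zero => simp
  | succ k => rw [Nat.add_sub_cancel, pow_succ]; ring

theorem summable_natCast_mul_pow_pred {y : ℝ} (hb : ∀ k, 0 ≤ b k) (hy : 0 < y)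
    (h : Summable fun k : ℕ => ((k : ℝ) + 1) * b k * y ^ k) :
    Summable fun k : ℕ => (k : ℝ) * b k * y ^ (k - 1) := by
  refine (h.mul_left y⁻¹).of_nonneg_of_le (fun k => by have := hb k; positivity) fun k => ?_
  have := hb k
  calc (k : ℝ) * b k * y ^ (k - 1) = y⁻¹ * (k * b k * y ^ k) := by
        rw [show (k : ℝ) * b k * y ^ k = b k * (k * y ^ k) by ring, ← natCast_mul_pow_pred_mul k y]
        field_simp
    _ ≤ y⁻¹ * ((k + 1) * b k * y ^ k) := by gcongr; linarith

theorem not_summable_mul_pow_of_le_rpow_mul {ρ x C s : ℝ} (hρ : 0 < ρ) (hC : 0 < C)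
    (hb : ∀ᶠ k : ℕ in atTop, C ≤ ((k : ℝ) + 1) ^ s * (b k * ρ ^ k)) (hx : ρ < |x|) :
    ¬ Summable fun k => b k * x ^ k := by
  intro hsum
  set r := |x| / ρ
  have hr : 1 < r := (one_lt_div hρ).mpr hx
  obtain ⟨m, hm⟩ := exists_nat_ge s
  have hlim : Tendsto (fun k : ℕ => ((k : ℝ) + 1) ^ m / r ^ k) atTop (𝓝 0) := by
    have := ((tendsto_pow_const_div_const_pow_of_one_lt m hr).comp
      (tendsto_add_atTop_nat 1)).const_mul r
    rw [mul_zero] at this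
    refine this.congr fun k => ?_
    simp only [Function.comp, Nat.cast_add, Nat.cast_one, pow_succ]
    field_simp
  have hterm := (tendsto_zero_iff_norm_tendsto_zero.mp hsum.tendsto_atTop_zero).eventually
    (eventually_lt_nhds hC)
  obtain ⟨k, hCk, hmk, hxk⟩ :=
    (hb.and ((hlim.eventually (eventually_le_nhds one_pos)).and hterm)).exists
  have hk1 : (1 : ℝ) ≤ (k : ℝ) + 1 := by linarith [(Nat.cast_nonneg k : (0 : ℝ) ≤ k)]
  have hpos : 0 < b k * ρ ^ k :=
    pos_of_mul_pos_right (hC.trans_le hCk) (Real.rpow_nonneg (by linarith) s)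
  have hρk : 0 < ρ ^ k := pow_pos hρ k
  have hbk : 0 < b k := (mul_pos_iff_of_pos_right hρk).mp hpos
  have hx0 : 0 < |x| := hρ.trans hx
  refine lt_irrefl C ?_
  calc C ≤ ((k : ℝ) + 1) ^ s * (b k * ρ ^ k) := hCk
    _ ≤ ((k : ℝ) + 1) ^ m * (b k * ρ ^ k) := by
        rw [← Real.rpow_natCast ((k : ℝ) + 1) m]
        exact mul_le_mul_of_nonneg_right
          (Real.rpow_le_rpow_of_exponent_le hk1 hm) hpos.le
    _ = ((k : ℝ) + 1) ^ m / r ^ k * (b k * |x| ^ k) := by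
        simp only [r, div_pow]
        field_simp
    _ ≤ 1 * ‖b k * x ^ k‖ := by
        rw [Real.norm_eq_abs, abs_mul, abs_pow, abs_of_pos hbk]
        gcongr
    _ < C := by rwa [one_mul]

theorem sub_le_mul_sub_of_hasSum_mul_pow {x y F G D : ℝ} (hb : ∀ k, 0 ≤ b k) (hx : 0 ≤ x)
    (hxy : x ≤ y) (hF : HasSum (fun k => b k * y ^ k) F) (hG : HasSum (fun k => b k * x ^ k) G)
    (hD : HasSum (fun k : ℕ => (k : ℝ) * b k * y ^ (k - 1)) D) : F - G ≤ D * (y - x) := by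
  refine hasSum_le (fun k => ?_) (hF.sub hG) (hD.mul_right (y - x))
  have h := abs_pow_sub_pow_le y x k
  rw [abs_of_nonneg (sub_nonneg.2 hxy), max_eq_left (abs_le_abs_of_nonneg hx hxy),
    abs_of_nonneg (hx.trans hxy)] at h
  calc b k * y ^ k - b k * x ^ k = b k * (y ^ k - x ^ k) := by ring
    _ ≤ b k * ((y - x) * k * y ^ (k - 1)) :=
        mul_le_mul_of_nonneg_left ((le_abs_self _).trans h) (hb k)
    _ = (k : ℝ) * b k * y ^ (k - 1) * (y - x) := by ring

theorem eq_of_hasSum_mul_pow_eq_one_sub_inv {x y : ℝ} (hb : ∀ k, 0 ≤ b k) (hx : 0 < x)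
    (hxy : x ≤ y) (hF : HasSum (fun k => b k * y ^ k) (1 - 1 / y))
    (hD : HasSum (fun k : ℕ => (k : ℝ) * b k * y ^ (k - 1)) ((1 / y) ^ 2))
    (hG : HasSum (fun k => b k * x ^ k) (1 - 1 / x)) : x = y := by
  have h := sub_le_mul_sub_of_hasSum_mul_pow hb hx.le hxy hF hG hD
  have hy : 0 < y := hx.trans_le hxy
  field_simp at h
  nlinarith

theorem summable_and_tsum_eq_one_sub_inv_iff {x y : ℝ} (hb : ∀ k, 0 ≤ b k)
    (hx : 0 < x) (hF : HasSum (fun k => b k * y ^ k) (1 - 1 / y))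
    (hD : HasSum (fun k : ℕ => (k : ℝ) * b k * y ^ (k - 1)) ((1 / y) ^ 2))
    (hdiv : ∀ z : ℝ, y < |z| → ¬ Summable fun k => b k * z ^ k) :
    (Summable (fun k => b k * x ^ k) ∧ ∑' k, b k * x ^ k = 1 - 1 / x) ↔ x = y := by
  constructor
  · rintro ⟨hs, hsx⟩
    rcases le_or_gt x y with hxy | hyx
    · exact eq_of_hasSum_mul_pow_eq_one_sub_inv hb hx hxy hF hD (hsx ▸ hs.hasSum)
    · exact absurd hs (hdiv x (by rwa [abs_of_pos hx]))
  · rintro rfl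
    exact ⟨hF.summable, hF.tsum_eq⟩

end NonnegPowerSeries

section Tilt

variable {p b : ℕ → ℝ} {ρ A B c β : ℝ}

theorem tilt_mul_one_div_pow (hβ : β ≠ 0) (hb : ∀ k, b k = c * (β * ρ) ^ k * p k) (k : ℕ) :
    b k * (1 / β) ^ k = c * (p k * ρ ^ k) := by
  rw [hb, mul_pow, one_div_pow]
  field_simp

theorem hasSum_tilt_mul_one_div_pow (hβ : β ≠ 0) (hb : ∀ k, b k = c * (β * ρ) ^ k * p k)
    (hA : HasSum (fun k => p k * ρ ^ k) A) : HasSum (fun k => b k * (1 / β) ^ k) (c * A) :=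
  (hA.mul_left c).congr_fun fun k => tilt_mul_one_div_pow hβ hb k

theorem hasSum_natCast_mul_tilt_mul_one_div_pow_pred (hβ : β ≠ 0)
    (hb : ∀ k, b k = c * (β * ρ) ^ k * p k)
    (hB : HasSum (fun k : ℕ => (k : ℝ) * p k * ρ ^ (k - 1)) B) :
    HasSum (fun k : ℕ => (k : ℝ) * b k * (1 / β) ^ (k - 1)) (c * β * ρ * B) := by
  refine (hB.mul_left (c * β * ρ)).congr_fun fun k => ?_
  rw [hb]
  cases k with
  | zero => simp
  | succ k =>
    rw [Nat.add_sub_cancel, pow_succ, mul_pow, one_div_pow]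
    field_simp

theorem exists_pos_of_eventually_le_rpow_mul {C s : ℝ} (hρ : 0 ≤ ρ) (hC : 0 < C)
    (hlow : ∀ᶠ k : ℕ in atTop, C ≤ ((k : ℝ) + 1) ^ s * (p k * ρ ^ k)) :
    ∃ k, 1 ≤ k ∧ 0 < p k := by
  obtain ⟨k, hk, hk1⟩ := (hlow.and (eventually_ge_atTop 1)).exists
  have hpk := pos_of_mul_pos_right (hC.trans_le hk) (Real.rpow_nonneg (by positivity) s)
  exact ⟨k, hk1, pos_of_mul_pos_left hpk (pow_nonneg hρ k)⟩

theorem tilted_series_critical {C s : ℝ} (hρ : 0 < ρ) (hp : ∀ k, 0 ≤ p k)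
    (hsum : Summable fun k : ℕ => ((k : ℝ) + 1) * p k * ρ ^ k)
    (hC : 0 < C) (hlow : ∀ᶠ k : ℕ in atTop, C ≤ ((k : ℝ) + 1) ^ s * (p k * ρ ^ k))
    (hA : A = ∑' k, p k * ρ ^ k) (hB : B = ∑' k : ℕ, (k : ℝ) * p k * ρ ^ (k - 1))
    (hc : c = 1 / (A + ρ * B)) (hβ : β = ρ * B / (A + ρ * B))
    (hb : ∀ k, b k = c * (β * ρ) ^ k * p k) :
    (0 < β ∧ β < 1) ∧
    (∀ x : ℝ, |x| < 1 / β → Summable fun k => b k * x ^ k) ∧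
    (∀ x : ℝ, 1 / β < |x| → ¬ Summable fun k => b k * x ^ k) ∧
    (∑' k, b k * (1 / β) ^ k) = 1 - β ∧
    (∑' k : ℕ, (k : ℝ) * b k * (1 / β) ^ (k - 1)) = β ^ 2 ∧
    (∀ x : ℝ, 1 ≤ x →
      ((Summable (fun k => b k * x ^ k) ∧ (∑' k, b k * x ^ k) = 1 - 1 / x) ↔ x = 1 / β)) := by
  have hA' : HasSum (fun k => p k * ρ ^ k) A :=
    hA ▸ (summable_mul_pow_of_summable_succ_mul hp hρ.le hsum).hasSum
  have hB' : HasSum (fun k : ℕ => (k : ℝ) * p k * ρ ^ (k - 1)) B :=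
    hB ▸ (summable_natCast_mul_pow_pred hp hρ hsum).hasSum
  obtain ⟨k₀, hk₀, hpk₀⟩ := exists_pos_of_eventually_le_rpow_mul hρ.le hC hlow
  have hA0 : 0 < A :=
    hA ▸ hA'.summable.tsum_pos (fun k => by have := hp k; positivity) k₀ (by positivity)
  have hB0 : 0 < B := by
    have : (0 : ℝ) < k₀ := by exact_mod_cast hk₀
    exact hB ▸ hB'.summable.tsum_pos (fun k => by have := hp k; positivity) k₀ (by positivity)
  have hc0 : 0 < c := hc ▸ by positivity
  have hβ0 : 0 < β := hβ ▸ by positivity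
  have hcA : c * A = 1 - β := by rw [hc, hβ]; field_simp; ring
  have hcB : c * β * ρ * B = (1 / (1 / β)) ^ 2 := by rw [one_div_one_div, hc, hβ]; field_simp
  have hbnn : ∀ k, 0 ≤ b k := fun k => by rw [hb]; have := hp k; positivity
  have hval := hasSum_tilt_mul_one_div_pow hβ0.ne' hb hA'
  have hder := hasSum_natCast_mul_tilt_mul_one_div_pow_pred hβ0.ne' hb hB'
  rw [hcA] at hval
  rw [hcB] at hder
  have hdiv : ∀ x : ℝ, 1 / β < |x| → ¬ Summable fun k => b k * x ^ k := by
    refine fun x =>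
      not_summable_mul_pow_of_le_rpow_mul (s := s) (one_div_pos.2 hβ0) (mul_pos hc0 hC) ?_
    filter_upwards [hlow] with k hk
    rw [tilt_mul_one_div_pow hβ0.ne' hb, mul_left_comm]
    exact mul_le_mul_of_nonneg_left hk hc0.le
  refine ⟨⟨hβ0, by nlinarith [mul_pos hc0 hA0]⟩,
    fun x hx => summable_mul_pow_of_abs_le hbnn hval.summable hx.le, hdiv, hval.tsum_eq,
    by rw [hder.tsum_eq, one_div_one_div], fun x hx => ?_⟩
  exact summable_and_tsum_eq_one_sub_inv_iff hbnn (by linarith) (by rwa [one_div_one_div]) hder hdiv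

end Tilt

/-- Let `a > 3/2`, let `q°_k ~ k^{-a}` be nonnegative, let
`A = f∘(1/4)`, `B = f∘'(1/4)`, `c = 4/(4A + B)`, `β = B/(4A + B)` and
`q_k = c·(β/4)^{k-1}·q°_k`. Then (i) `β ∈ (0,1)`; (ii) the power series
`f_q(x) = ∑_{k ≥ 1} N(k)·q_k·x^{k-1}` has radius of convergence `1/β`;
(iii) `f_q(1/β) = 1 - β`; (iv) `f_q'(1/β) = β²`; (v) `x = 1/β` is the unique real
`x ≥ 1` at which the series converges and `f_q(x) = 1 - 1/x`.
(Series over `k ≥ 1` are reindexed by `k + 1`, `k ≥ 0`.) -/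
theorem stmt_0
    (a : ℝ) (ha : 3 / 2 < a)
    (q₀ : ℕ → ℝ) (hq₀ : ∀ k : ℕ, 1 ≤ k → 0 ≤ q₀ k)
    (hasymp : Tendsto (fun k : ℕ => (k : ℝ) ^ a * q₀ k) atTop (nhds 1))
    (N : ℕ → ℕ) (hN : ∀ k : ℕ, N k = (2 * k - 1).choose (k - 1))
    (A B : ℝ)
    (hA : A = ∑' k : ℕ, (N (k + 1) : ℝ) * q₀ (k + 1) * (1 / 4 : ℝ) ^ k)
    (hB : B = ∑' k : ℕ, (k : ℝ) * (N (k + 1) : ℝ) * q₀ (k + 1) * (1 / 4 : ℝ) ^ (k - 1))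
    (c β : ℝ) (hc : c = 4 / (4 * A + B)) (hβ : β = B / (4 * A + B))
    (q : ℕ → ℝ) (hq : ∀ k : ℕ, 1 ≤ k → q k = c * (β / 4) ^ (k - 1) * q₀ k) :
    (0 < β ∧ β < 1) ∧
    (∀ x : ℝ, |x| < 1 / β →
      Summable (fun k : ℕ => (N (k + 1) : ℝ) * q (k + 1) * x ^ k)) ∧
    (∀ x : ℝ, 1 / β < |x| →
      ¬ Summable (fun k : ℕ => (N (k + 1) : ℝ) * q (k + 1) * x ^ k)) ∧
    (∑' k : ℕ, (N (k + 1) : ℝ) * q (k + 1) * (1 / β) ^ k) = 1 - β ∧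
    (∑' k : ℕ, (k : ℝ) * (N (k + 1) : ℝ) * q (k + 1) * (1 / β) ^ (k - 1)) = β ^ 2 ∧
    (∀ x : ℝ, 1 ≤ x →
      ((Summable (fun k : ℕ => (N (k + 1) : ℝ) * q (k + 1) * x ^ k) ∧
          (∑' k : ℕ, (N (k + 1) : ℝ) * q (k + 1) * x ^ k) = 1 - 1 / x) ↔ x = 1 / β)) := by
  have hNchoose : ∀ k : ℕ, ((2 * k + 1).choose k : ℝ) = N (k + 1) := fun k => by
    rw [hN, show 2 * (k + 1) - 1 = 2 * k + 1 by omega, Nat.add_sub_cancel]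
  have hw0 : ∀ k : ℕ, 0 ≤ q₀ (k + 1) := fun k => hq₀ (k + 1) k.succ_pos
  have hw : Tendsto (fun k : ℕ => ((k : ℝ) + 1) ^ a * q₀ (k + 1)) atTop (𝓝 1) := by
    simpa only [Function.comp_def, Nat.cast_add, Nat.cast_one] using
      hasymp.comp (tendsto_add_atTop_nat 1)
  have hsum := summable_succ_mul_choose_mul_quarter_pow ha hw0 hw
  have hlow := eventually_le_rpow_mul_choose_mul_quarter_pow hw
  simp only [hNchoose] at hsum hlow
  have hquarter : A + 1 / 4 * B = (4 * A + B) / 4 := by ring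
  have key := tilted_series_critical (b := fun k => (N (k + 1) : ℝ) * q (k + 1)) (c := c) (β := β)
    (by norm_num : (0 : ℝ) < 1 / 4)
    (fun k => mul_nonneg (Nat.cast_nonneg _) (hw0 k)) hsum one_half_pos hlow hA
    (by simpa only [mul_assoc] using hB) (by rw [hc, hquarter, one_div_div])
    (by rw [hβ, hquarter, div_div_eq_mul_div]; ring)
    (fun k => by rw [hq (k + 1) k.succ_pos, Nat.add_sub_cancel]; ring)
  simpa only [mul_assoc] using key
end

section
/- There exists a finite constant K such that for every integer p ≥ 2 and every j ∈ {0, 1, …, p}, the discrete bridge of length p satisfies E[Y_j²] ≤ K · j·(p−j)/p. -/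
/-!
The law of `X` is invariant under permutations of the coordinates, so `E[X_i X_j]` takes a
single value `d` for `i ≠ j`; writing `c = E[X_i²]`, the constraint `∑ X_i = 0` gives
`c + (p - 1) d = 0`, and expanding `Y_j²` then yields `(p - 1) E[Y_j²] = j (p - j) c`.
Shifting by one identifies `E_p` with the weak compositions of `p` into `p` parts, whose
generating function is `(1 - X)⁻ᵖ`; extracting a coefficient gives `c = 2 (p - 1) / (p + 1)`.
Hence `E[Y_j²] = 2 j (p - j) / (p + 1)`, and `K = 2` works.
-/

open Finset PowerSeries

section Exchangeable

variable {ι R : Type*} {s : Finset (ι → R)}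
  (hs : ∀ σ : Equiv.Perm ι, ∀ x ∈ s, x ∘ σ ∈ s)
include hs

theorem sum_comp_perm_of_perm_invariant {M : Type*} [AddCommMonoid M] (σ : Equiv.Perm ι)
    (F : (ι → R) → M) :
    ∑ x ∈ s, F (x ∘ σ) = ∑ x ∈ s, F x :=
  sum_nbij' (· ∘ σ) (· ∘ σ.symm) (hs σ) (hs σ.symm) (fun x _ => by ext; simp)
    (fun x _ => by ext; simp) fun _ _ => rfl

variable [CommRing R]

theorem sum_apply_sq_eq_of_perm_invariant (i i' : ι) :
    ∑ x ∈ s, x i ^ 2 = ∑ x ∈ s, x i' ^ 2 := by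
  obtain ⟨σ, hσ⟩ := MulAction.exists_smul_eq (Equiv.Perm ι) i' i
  rw [Equiv.Perm.smul_def] at hσ
  simpa [hσ] using sum_comp_perm_of_perm_invariant hs σ fun x => x i' ^ 2

theorem sum_apply_mul_apply_eq_of_perm_invariant {i j i' j' : ι} (hij : i ≠ j)
    (hij' : i' ≠ j') :
    ∑ x ∈ s, x i * x j = ∑ x ∈ s, x i' * x j' := by
  obtain ⟨σ, hσi, hσj⟩ :=
    MulAction.is_two_pretransitive_iff.mp (Equiv.Perm.isMultiplyPretransitive ι 2) hij' hij
  rw [Equiv.Perm.smul_def] at hσi hσj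
  simpa [hσi, hσj] using sum_comp_perm_of_perm_invariant hs σ fun x => x i' * x j'

theorem sum_sum_mul_sum_eq_of_perm_invariant [DecidableEq ι] {i₀ i₁ : ι} (h : i₀ ≠ i₁)
    (S T : Finset ι) :
    ∑ x ∈ s, (∑ i ∈ S, x i) * (∑ j ∈ T, x j) =
      #S * #T * ∑ x ∈ s, x i₀ * x i₁ +
        #(S ∩ T) * (∑ x ∈ s, x i₀ ^ 2 - ∑ x ∈ s, x i₀ * x i₁) := by
  set c := ∑ x ∈ s, x i₀ ^ 2
  set d := ∑ x ∈ s, x i₀ * x i₁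
  have hpair : ∀ i j, ∑ x ∈ s, x i * x j = d + if i = j then c - d else 0 := by
    intro i j
    split_ifs with hij
    · subst hij
      simpa [c, sq] using sum_apply_sq_eq_of_perm_invariant hs i i₀
    · simpa using sum_apply_mul_apply_eq_of_perm_invariant hs hij h
  calc ∑ x ∈ s, (∑ i ∈ S, x i) * (∑ j ∈ T, x j)
        = ∑ i ∈ S, ∑ j ∈ T, ∑ x ∈ s, x i * x j := by
        simp_rw [sum_mul_sum]
        rw [sum_comm]
        exact sum_congr rfl fun i _ => sum_comm
    _ = ∑ i ∈ S, (#T * d + if i ∈ T then c - d else 0) := by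
        simp only [hpair, sum_add_distrib, sum_const, nsmul_eq_mul, sum_ite_eq]
    _ = _ := by
        rw [sum_add_distrib, sum_ite_mem, sum_const, sum_const, nsmul_eq_mul, nsmul_eq_mul]
        ring

theorem mul_sum_sq_sum_eq_of_perm_invariant_of_sum_eq_zero [Fintype ι] [Nontrivial ι]
    (hzero : ∀ x ∈ s, ∑ i, x i = 0)
    (i₀ : ι) (S : Finset ι) :
    (Fintype.card ι - 1 : R) * ∑ x ∈ s, (∑ i ∈ S, x i) ^ 2 =
      #S * (Fintype.card ι - #S) * ∑ x ∈ s, x i₀ ^ 2 := by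
  classical
  obtain ⟨i₁, h⟩ := exists_ne i₀
  have hS := sum_sum_mul_sum_eq_of_perm_invariant hs h.symm S S
  have hcross := sum_sum_mul_sum_eq_of_perm_invariant hs h.symm {i₀} univ
  rw [sum_eq_zero fun x hx => by rw [hzero x hx, mul_zero]] at hcross
  simp only [card_singleton, card_univ, inter_self, singleton_inter_of_mem (mem_univ _)]
    at hS hcross
  simp only [sq] at hS hcross ⊢
  linear_combination (Fintype.card ι - 1 : R) * hS - (#S * (#S - 1) : R) * hcross

end Exchangeable

namespace PowerSeries

theorem coeff_prod_eq_sum_antidiagonalTuple {R : Type*} [CommSemiring R] {k : ℕ}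
    (g : Fin k → R⟦X⟧) (n : ℕ) :
    coeff n (∏ i, g i) = ∑ f ∈ Nat.antidiagonalTuple k n, ∏ i, coeff (f i) (g i) := by
  rw [coeff_prod, finsuppAntidiag, sum_map, ← piAntidiag_univ_fin_eq_antidiagonalTuple]
  exact sum_attach (piAntidiag univ n) fun f => ∏ i, coeff (f i) (g i)

theorem coeff_invOneSubPow_succ {S : Type*} [CommRing S] (d n : ℕ) :
    coeff n (invOneSubPow S (d + 1)).val = (d + n).choose d := by
  rw [invOneSubPow_val_succ_eq_mk_add_choose, coeff_mk]

theorem invOneSubPow_one_pow {S : Type*} [CommRing S] (k : ℕ) :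
    (invOneSubPow S 1).val ^ k = (invOneSubPow S k).val := by
  rw [← Units.val_pow_eq_pow_val, invOneSubPow_eq_inv_one_sub_pow,
    invOneSubPow_eq_inv_one_sub_pow, ← pow_mul, one_mul]

theorem mk_sub_one_sq :
    (mk fun a => ((a : ℤ) - 1) ^ 2 : ℤ⟦X⟧) =
      2 * (invOneSubPow ℤ 3).val - 5 * (invOneSubPow ℤ 2).val +
        4 * (invOneSubPow ℤ 1).val := by
  ext a
  have h := Nat.add_one_mul_choose_eq (a + 1) 1
  simp only [Nat.choose_one_right] at h
  simp only [coeff_mk, map_add, map_sub, coeff_invOneSubPow_succ, ← map_ofNat (C (R := ℤ)),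
    coeff_C_mul]
  rw [add_comm 2, add_comm 1, Nat.choose_one_right, Nat.choose_zero_right]
  have h' : ((a + 2).choose 2 : ℤ) * 2 = (a + 2) * (a + 1) := by exact_mod_cast h.symm
  push_cast
  linear_combination -h'

end PowerSeries

namespace DiscreteBridge

theorem sum_eq_sum_antidiagonalTuple_sub_one {p : ℕ} {s : Finset (Fin p → ℤ)} {M : Type*}
    [AddCommMonoid M] (hs : ∀ x, x ∈ s ↔ (∀ i, -1 ≤ x i) ∧ ∑ i, x i = 0)
    (F : (Fin p → ℤ) → M) :
    ∑ x ∈ s, F x = ∑ f ∈ Nat.antidiagonalTuple p p, F fun i => (f i : ℤ) - 1 := by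
  refine (sum_nbij' (fun (f : Fin p → ℕ) i => (f i : ℤ) - 1)
    (fun (x : Fin p → ℤ) i => (x i + 1).toNat) ?_ ?_ ?_ ?_ fun _ _ => rfl).symm
  · intro f hf
    rw [Nat.mem_antidiagonalTuple] at hf
    rw [hs]
    refine ⟨fun i => by linarith [(f i).cast_nonneg (α := ℤ)], ?_⟩
    rw [sum_sub_distrib, ← Nat.cast_sum, hf]
    simp
  · intro x hx
    rw [hs] at hx
    rw [Nat.mem_antidiagonalTuple]
    have h : ∀ i, ((x i + 1).toNat : ℤ) = x i + 1 :=
      fun i => Int.toNat_of_nonneg (by linarith [hx.1 i])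
    zify
    simp [h, sum_add_distrib, hx.2]
  · intro f _
    ext i
    simp
  · intro x hx
    rw [hs] at hx
    ext i
    simp [Int.toNat_of_nonneg (by linarith [hx.1 i] : 0 ≤ x i + 1)]

section

variable {m : ℕ} {s : Finset (Fin (m + 1) → ℤ)}
  (hs : ∀ x, x ∈ s ↔ (∀ i, -1 ≤ x i) ∧ ∑ i, x i = 0)
include hs

theorem card_eq_choose : #s = (2 * m + 1).choose m := by
  have h : (#s : ℤ) = coeff (m + 1) (∏ _i : Fin (m + 1), (invOneSubPow ℤ 1).val) := by
    rw [card_eq_sum_ones, Nat.cast_sum, sum_eq_sum_antidiagonalTuple_sub_one hs,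
      coeff_prod_eq_sum_antidiagonalTuple]
    simp [coeff_invOneSubPow_succ 0]
  rw [prod_const, card_univ, Fintype.card_fin, invOneSubPow_one_pow, coeff_invOneSubPow_succ] at h
  rw [two_mul, add_assoc]
  exact_mod_cast h

theorem sum_sq_apply_zero_eq :
    ∑ x ∈ s, x 0 ^ 2 = 2 * (2 * m + 3).choose (m + 2) - 5 * (2 * m + 2).choose (m + 1) +
      4 * (2 * m + 1).choose m := by
  let g : Fin (m + 1) → ℤ⟦X⟧ :=
    Fin.cons (mk fun a => ((a : ℤ) - 1) ^ 2) fun _ => (invOneSubPow ℤ 1).val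
  have h : ∑ x ∈ s, x 0 ^ 2 = coeff (m + 1) (∏ i, g i) := by
    rw [sum_eq_sum_antidiagonalTuple_sub_one hs, coeff_prod_eq_sum_antidiagonalTuple]
    simp [g, Fin.prod_univ_succ, coeff_invOneSubPow_succ 0]
  rw [h, Fin.prod_univ_succ]
  simp only [g, Fin.cons_zero, Fin.cons_succ, prod_const, card_univ, Fintype.card_fin,
    invOneSubPow_one_pow, mk_sub_one_sq]
  simp only [sub_mul, add_mul, mul_assoc, ← Units.val_mul, ← invOneSubPow_add, map_add, map_sub,
    ← map_ofNat (C (R := ℤ)), coeff_C_mul]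
  rw [show 3 + m = (m + 2) + 1 by ring, show 2 + m = (m + 1) + 1 by ring, add_comm 1 m,
    coeff_invOneSubPow_succ, coeff_invOneSubPow_succ, coeff_invOneSubPow_succ]
  ring_nf

theorem mul_sum_sq_apply_zero_eq :
    ((m : ℤ) + 2) * ∑ x ∈ s, x 0 ^ 2 = 2 * m * #s := by
  have hcentral : (2 * m + 2).choose (m + 1) = 2 * (2 * m + 1).choose m := by
    rw [show 2 * m + 2 = 2 * m + 1 + 1 by ring, Nat.choose_succ_succ', Nat.choose_symm_half]
    ring
  have hstep : (2 * m + 3) * (2 * m + 2).choose (m + 1) = (2 * m + 3).choose (m + 2) * (m + 2) :=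
    Nat.add_one_mul_choose_eq (2 * m + 2) (m + 1)
  rw [hcentral] at hstep
  rw [sum_sq_apply_zero_eq hs, card_eq_choose hs, hcentral]
  zify at hstep
  push_cast at hstep ⊢
  linear_combination -2 * hstep

end

theorem mul_sum_sq_sum_eq {p : ℕ} (hp : 2 ≤ p) {s : Finset (Fin p → ℤ)}
    (hs : ∀ x, x ∈ s ↔ (∀ i, -1 ≤ x i) ∧ ∑ i, x i = 0) (S : Finset (Fin p)) :
    ((p : ℤ) + 1) * ∑ x ∈ s, (∑ i ∈ S, x i) ^ 2 = 2 * #S * (p - #S) * #s := by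
  obtain ⟨m, rfl⟩ : ∃ m, p = m + 2 := ⟨p - 2, by omega⟩
  have hperm : ∀ σ : Equiv.Perm (Fin (m + 2)), ∀ x ∈ s, x ∘ σ ∈ s := by
    intro σ x hx
    rw [hs] at hx ⊢
    exact ⟨fun i => hx.1 (σ i), by rw [← hx.2]; exact Equiv.sum_comp σ x⟩
  have hexch := mul_sum_sq_sum_eq_of_perm_invariant_of_sum_eq_zero hperm
    (fun x hx => ((hs x).mp hx).2) 0 S
  have hsq := mul_sum_sq_apply_zero_eq hs
  rw [Fintype.card_fin] at hexch
  push_cast at hexch hsq ⊢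
  apply mul_left_cancel₀ (show ((m : ℤ) + 1) ≠ 0 by positivity)
  linear_combination ((m : ℤ) + 3) * hexch + (#S : ℤ) * ((m : ℤ) + 2 - #S) * hsq

end DiscreteBridge

/-- There is a finite constant `K` such that for every `p ≥ 2` and
every `j ∈ {0,…,p}`, the discrete bridge of length `p` (the partial-sum process
`Y_j = x_1 + ⋯ + x_j` of a uniform vector in
`E_p = {x ∈ {-1,0,1,…}^p : ∑ x_i = 0}`) satisfies `E[Y_j²] ≤ K · j(p-j)/p`. -/
theorem stmt_2 :
    ∃ K : ℝ, ∀ p : ℕ, 2 ≤ p →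
      ∀ hfin : {x : Fin p → ℤ | (∀ i, -1 ≤ x i) ∧ ∑ i, x i = 0}.Finite,
      ∀ j : ℕ, j ≤ p →
        (∑ x ∈ hfin.toFinset,
            (((∑ i ∈ univ.filter (fun i : Fin p => (i : ℕ) < j), x i : ℤ) : ℝ)) ^ 2) /
            (hfin.toFinset.card : ℝ) ≤
          K * ((j : ℝ) * ((p : ℝ) - (j : ℝ)) / (p : ℝ)) := by
  refine ⟨2, fun p hp hfin j hj => ?_⟩
  have hs : ∀ x, x ∈ hfin.toFinset ↔ (∀ i, -1 ≤ x i) ∧ ∑ i, x i = 0 :=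
    fun x => hfin.mem_toFinset
  have hS : #(univ.filter fun i : Fin p => (i : ℕ) < j) = j := by
    rw [Fin.card_filter_val_lt, min_eq_right hj]
  have key := DiscreteBridge.mul_sum_sq_sum_eq hp hs (univ.filter fun i : Fin p => (i : ℕ) < j)
  rw [hS] at key
  have keyR : ((p : ℝ) + 1) * ∑ x ∈ hfin.toFinset,
      (((∑ i ∈ univ.filter (fun i : Fin p => (i : ℕ) < j), x i : ℤ) : ℝ)) ^ 2 =
        2 * j * (p - j) * #hfin.toFinset := by
    exact_mod_cast key
  have hN : (0 : ℝ) < #hfin.toFinset := by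
    exact_mod_cast card_pos.mpr ⟨0, (hs 0).mpr ⟨fun _ => by norm_num, by simp⟩⟩
  have hjp : (0 : ℝ) ≤ j * (p - j) :=
    mul_nonneg (by positivity) (sub_nonneg.mpr (by exact_mod_cast hj))
  calc _ = 2 * (j * (p - j) / ((p : ℝ) + 1)) := by
        rw [div_eq_iff hN.ne']
        field_simp
        linear_combination keyR
    _ ≤ 2 * (j * (p - j) / p) := by gcongr; linarith
end

section
/- Assume there exists a constant K' ∈ (0,1] such that ℙ(V > n) ≥ K' · n^{−1/α} for every integer n ≥ 1, where V = inf{n ≥ 0 : S_n = −1}. Then for every integer n ≥ 1 and every real x ≥ 1, ℙ(−J_n ≥ x · n^{1/α}) ≤ exp(−K'·x/2), where J_n = min_{0≤k≤n} S_k. -/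
/-!
Since the walk is skip-free downwards, it passes through `-1` on its way to any level `-j`, and
after the first passage time at `-1` it still has to descend by `j - 1` within the remaining time.
The Markov property at that time gives `ℙ(-J_n ≥ j + 1) ≤ ℙ(-J_n ≥ 1) ℙ(-J_n ≥ j)`, hence
`ℙ(-J_n ≥ j) ≤ ℙ(V ≤ n)^j ≤ (1 - K' n^{-1/α})^j ≤ exp(-K' j n^{-1/α})`.
Taking `j = ⌈x n^{1/α}⌉` yields `exp(-K' x)`.
-/

open MeasureTheory ProbabilityTheory Finset Function

def walkReaches (n : ℕ) (a : ℤ) : Set (ℕ → ℤ) :=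
  {g | ∃ k ≤ n, ∑ i ∈ range k, g i ≤ a}

def firstHitsNegOneAt (t : ℕ) : Set (ℕ → ℤ) :=
  {g | ∑ i ∈ range t, g i = -1 ∧ ∀ l < t, ∑ i ∈ range l, g i ≠ -1}

lemma measurableSet_walkReaches (n : ℕ) (a : ℤ) : MeasurableSet (walkReaches n a) := by
  have : walkReaches n a = ⋃ k ∈ Set.Iic n, (fun g : ℕ → ℤ ↦ ∑ i ∈ range k, g i) ⁻¹' Set.Iic a := by
    ext; simp [walkReaches]
  rw [this]
  exact .biUnion (Set.to_countable _) fun k _ ↦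
    (measurable_sum _ fun i _ ↦ measurable_pi_apply i) measurableSet_Iic

lemma pairwise_disjoint_firstHitsNegOneAt : Pairwise (Disjoint on firstHitsNegOneAt) := by
  intro t t' htt'
  rw [Function.onFun, Set.disjoint_left]
  rintro g ⟨ht, hbefore⟩ ⟨ht', hbefore'⟩
  rcases htt'.lt_or_gt with h | h
  · exact hbefore' t h ht
  · exact hbefore t' h ht'

lemma exists_mem_firstHitsNegOneAt {g : ℕ → ℤ} (hg : ∀ i, -1 ≤ g i) {k : ℕ}
    (hk : ∑ i ∈ range k, g i ≤ -1) : ∃ t ≤ k, g ∈ firstHitsNegOneAt t := by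
  classical
  have hex : ∃ t, ∑ i ∈ range t, g i ≤ -1 := ⟨k, hk⟩
  have hbefore : ∀ l < Nat.find hex, -1 < ∑ i ∈ range l, g i := fun l hl ↦
    not_le.1 (Nat.find_min hex hl)
  obtain ⟨u, hu⟩ := Nat.exists_eq_add_one_of_ne_zero (n := Nat.find hex) fun h ↦ by
    simpa [h] using Nat.find_spec hex
  -- skip-freeness: the first step below `0` cannot jump over `-1`
  have hhit : ∑ i ∈ range (Nat.find hex), g i = -1 := by
    have hprev := hbefore u (by omega)
    have hle := Nat.find_spec hex
    rw [hu, sum_range_succ] at hle ⊢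
    linarith [hg u]
  exact ⟨Nat.find hex, Nat.find_min' hex hk, hhit, fun l hl ↦ (hbefore l hl).ne'⟩

lemma exists_firstHitsNegOneAt_and_shift_mem_walkReaches {g : ℕ → ℤ} (hg : ∀ i, -1 ≤ g i)
    {n : ℕ} {a : ℤ} (ha : a ≤ 0) (h : g ∈ walkReaches n (a - 1)) :
    ∃ t ≤ n, g ∈ firstHitsNegOneAt t ∧ (fun i ↦ g (t + i)) ∈ walkReaches n a := by
  obtain ⟨k, hkn, hk⟩ := h
  obtain ⟨t, htk, hfirst⟩ := exists_mem_firstHitsNegOneAt hg (k := k) (by omega)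
  refine ⟨t, htk.trans hkn, hfirst, k - t, by omega, ?_⟩
  have hsplit := sum_range_add g t (k - t)
  rw [Nat.add_sub_cancel' htk, hfirst.1] at hsplit
  dsimp only
  omega

lemma mem_walkReaches_iff_inf'_le {g : ℕ → ℤ} {n : ℕ} {a : ℤ} :
    g ∈ walkReaches n a ↔
      (range (n + 1)).inf' nonempty_range_add_one (fun k ↦ ∑ i ∈ range k, g i) ≤ a := by
  simp [walkReaches, inf'_le_iff]

lemma biUnion_firstHitsNegOneAt_subset (n : ℕ) :
    ⋃ t ∈ range (n + 1), firstHitsNegOneAt t ⊆ walkReaches n (-1) := by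
  simp only [Set.iUnion_subset_iff, mem_range]
  exact fun t ht g hg ↦ ⟨t, by omega, hg.1.le⟩

section RandomWalk

variable {Ω : Type*} {mΩ : MeasurableSpace Ω} {μ : Measure Ω} {ξ : ℕ → Ω → ℤ}

lemma identDistrib_shift (hindep : iIndepFun ξ μ) (hident : ∀ i, IdentDistrib (ξ i) (ξ 0) μ μ)
    (t : ℕ) : IdentDistrib (fun ω i ↦ ξ (t + i) ω) (fun ω i ↦ ξ i ω) μ μ :=
  IdentDistrib.pi (fun i ↦ (hident (t + i)).trans (hident i).symm)
    (hindep.precomp (add_right_injective t)) hindep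

lemma measurable_partialSum_iSup_comap {t l : ℕ} (hl : l ≤ t) :
    Measurable[⨆ i ∈ Set.Iio t, MeasurableSpace.comap (ξ i) inferInstance]
      (fun ω ↦ ∑ i ∈ range l, ξ i ω) :=
  measurable_sum _ fun i hi ↦ (comap_measurable (ξ i)).mono
    (le_iSup₂ (f := fun i (_ : i ∈ Set.Iio t) ↦ MeasurableSpace.comap (ξ i) inferInstance) i
      (by simp only [Set.mem_Iio]; exact (mem_range.1 hi).trans_le hl)) le_rfl

lemma measurableSet_preimage_firstHitsNegOneAt (t : ℕ) :
    MeasurableSet[⨆ i ∈ Set.Iio t, MeasurableSpace.comap (ξ i) inferInstance]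
      ((fun ω i ↦ ξ i ω) ⁻¹' firstHitsNegOneAt t) := by
  have : (fun ω i ↦ ξ i ω) ⁻¹' firstHitsNegOneAt t =
      (fun ω ↦ ∑ i ∈ range t, ξ i ω) ⁻¹' {-1} ∩
        ⋂ l ∈ Set.Iio t, ((fun ω ↦ ∑ i ∈ range l, ξ i ω) ⁻¹' {-1})ᶜ := by
    ext; simp [firstHitsNegOneAt]
  rw [this]
  exact (measurable_partialSum_iSup_comap le_rfl (measurableSet_singleton _)).inter
    (.biInter (Set.to_countable _) fun l hl ↦
      (measurable_partialSum_iSup_comap (le_of_lt hl) (measurableSet_singleton _)).compl)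

/-- Markov property at the fixed time `t`, for an event `E` determined by the first `t` steps. -/
lemma measure_inter_preimage_shift (hmeas : ∀ i, Measurable (ξ i)) (hindep : iIndepFun ξ μ)
    (hident : ∀ i, IdentDistrib (ξ i) (ξ 0) μ μ) {t : ℕ} {E : Set Ω}
    (hE : MeasurableSet[⨆ i ∈ Set.Iio t, MeasurableSpace.comap (ξ i) inferInstance] E)
    {A : Set (ℕ → ℤ)} (hA : MeasurableSet A) :
    μ (E ∩ (fun ω i ↦ ξ (t + i) ω) ⁻¹' A) = μ E * μ ((fun ω i ↦ ξ i ω) ⁻¹' A) := by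
  have hpast_future := indep_iSup_of_disjoint (fun i ↦ (hmeas i).comap_le) hindep.iIndep
    (Set.Iio_disjoint_Ici le_rfl : Disjoint (Set.Iio t) (Set.Ici t))
  have hfuture : Measurable[⨆ i ∈ Set.Ici t, MeasurableSpace.comap (ξ i) inferInstance]
      (fun ω i ↦ ξ (t + i) ω) := by
    -- make the future σ-algebra the instance that `measurable_pi_lambda` picks up
    let := ⨆ i ∈ Set.Ici t, MeasurableSpace.comap (ξ i) inferInstance
    exact measurable_pi_lambda _ fun i ↦ (comap_measurable (ξ (t + i))).mono
      (le_iSup₂ (f := fun i (_ : i ∈ Set.Ici t) ↦ MeasurableSpace.comap (ξ i) inferInstance)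
        (t + i) (by simp)) le_rfl
  rw [(Indep_iff _ _ _).1 hpast_future E _ hE (hfuture hA),
    (identDistrib_shift hindep hident t).measure_mem_eq hA]

lemma measure_walkReaches_sub_one_le (hmeas : ∀ i, Measurable (ξ i)) (hindep : iIndepFun ξ μ)
    (hident : ∀ i, IdentDistrib (ξ i) (ξ 0) μ μ) (hstep : ∀ᵐ ω ∂μ, ∀ i, -1 ≤ ξ i ω)
    (n : ℕ) {a : ℤ} (ha : a ≤ 0) :
    μ ((fun ω i ↦ ξ i ω) ⁻¹' walkReaches n (a - 1)) ≤
      μ ((fun ω i ↦ ξ i ω) ⁻¹' walkReaches n (-1)) * μ ((fun ω i ↦ ξ i ω) ⁻¹' walkReaches n a) := by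
  set E : ℕ → Set Ω := fun t ↦ (fun ω i ↦ ξ i ω) ⁻¹' firstHitsNegOneAt t
  have hE : ∀ t, MeasurableSet (E t) := fun t ↦
    iSup₂_le (fun i _ ↦ (hmeas i).comap_le) _ (measurableSet_preimage_firstHitsNegOneAt t)
  calc μ ((fun ω i ↦ ξ i ω) ⁻¹' walkReaches n (a - 1))
      ≤ μ (⋃ t ∈ range (n + 1), E t ∩ (fun ω i ↦ ξ (t + i) ω) ⁻¹' walkReaches n a) := by
        refine measure_mono_ae (hstep.mono fun ω hω hmem ↦ ?_)
        obtain ⟨t, htn, hfirst, hshift⟩ :=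
          exists_firstHitsNegOneAt_and_shift_mem_walkReaches hω ha hmem
        exact Set.mem_biUnion (mem_range.2 (Nat.lt_succ_of_le htn)) ⟨hfirst, hshift⟩
    _ ≤ ∑ t ∈ range (n + 1), μ (E t ∩ (fun ω i ↦ ξ (t + i) ω) ⁻¹' walkReaches n a) :=
        measure_biUnion_finset_le _ _
    _ = (∑ t ∈ range (n + 1), μ (E t)) * μ ((fun ω i ↦ ξ i ω) ⁻¹' walkReaches n a) := by
        rw [sum_mul]
        exact sum_congr rfl fun t _ ↦ measure_inter_preimage_shift hmeas hindep hident
          (measurableSet_preimage_firstHitsNegOneAt t) (measurableSet_walkReaches n a)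
    _ = μ (⋃ t ∈ range (n + 1), E t) * μ ((fun ω i ↦ ξ i ω) ⁻¹' walkReaches n a) := by
        rw [measure_biUnion_finset (fun s _ t _ hst ↦
          (pairwise_disjoint_firstHitsNegOneAt hst).preimage _) fun t _ ↦ hE t]
    _ ≤ μ ((fun ω i ↦ ξ i ω) ⁻¹' walkReaches n (-1)) *
          μ ((fun ω i ↦ ξ i ω) ⁻¹' walkReaches n a) := by
        gcongr
        simpa only [E, ← Set.preimage_iUnion₂] using
          Set.preimage_mono (biUnion_firstHitsNegOneAt_subset n)

lemma measure_walkReaches_le_pow (hmeas : ∀ i, Measurable (ξ i)) (hindep : iIndepFun ξ μ)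
    (hident : ∀ i, IdentDistrib (ξ i) (ξ 0) μ μ) (hstep : ∀ᵐ ω ∂μ, ∀ i, -1 ≤ ξ i ω)
    (n j : ℕ) :
    μ ((fun ω i ↦ ξ i ω) ⁻¹' walkReaches n (-j)) ≤
      μ ((fun ω i ↦ ξ i ω) ⁻¹' walkReaches n (-1)) ^ j := by
  have := hindep.isProbabilityMeasure
  induction j with
  | zero => simpa using prob_le_one
  | succ j ih =>
    calc μ ((fun ω i ↦ ξ i ω) ⁻¹' walkReaches n (-(j + 1 : ℕ)))
        = μ ((fun ω i ↦ ξ i ω) ⁻¹' walkReaches n (-j - 1)) := by push_cast; ring_nf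
      _ ≤ μ ((fun ω i ↦ ξ i ω) ⁻¹' walkReaches n (-1)) *
            μ ((fun ω i ↦ ξ i ω) ⁻¹' walkReaches n (-j)) :=
          measure_walkReaches_sub_one_le hmeas hindep hident hstep n (by omega)
      _ ≤ μ ((fun ω i ↦ ξ i ω) ⁻¹' walkReaches n (-1)) ^ (j + 1) := by
          rw [pow_succ']
          gcongr

lemma measure_walkReaches_neg_one_le [IsProbabilityMeasure μ] (hmeas : ∀ i, Measurable (ξ i))
    (hstep : ∀ᵐ ω ∂μ, ∀ i, -1 ≤ ξ i ω) (n : ℕ) :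
    μ ((fun ω i ↦ ξ i ω) ⁻¹' walkReaches n (-1)) ≤
      1 - μ {ω | ∀ k ≤ n, ∑ i ∈ range k, ξ i ω ≠ -1} := by
  have hN : MeasurableSet {ω | ∀ k ≤ n, ∑ i ∈ range k, ξ i ω ≠ -1} := by measurability
  rw [← prob_compl_eq_one_sub hN]
  refine measure_mono_ae (hstep.mono fun ω hω hmem ↦ ?_)
  obtain ⟨k, hkn, hk⟩ := hmem
  obtain ⟨t, htk, hhit, -⟩ := exists_mem_firstHitsNegOneAt hω hk
  exact fun hN ↦ hN t (htk.trans hkn) hhit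

end RandomWalk

lemma ofReal_one_sub_pow_le_ofReal_exp (c : ℝ) (m : ℕ) :
    ENNReal.ofReal (1 - c) ^ m ≤ ENNReal.ofReal (Real.exp (-(c * m))) := by
  calc ENNReal.ofReal (1 - c) ^ m ≤ ENNReal.ofReal (Real.exp (-c)) ^ m := by
        gcongr
        linarith [Real.add_one_le_exp (-c)]
    _ = ENNReal.ofReal (Real.exp (-(c * m))) := by
        rw [← ENNReal.ofReal_pow (Real.exp_nonneg _), ← Real.exp_nat_mul, mul_neg, mul_comm]

/-- For a random walk with i.i.d. integer steps bounded below by `-1`,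
if `ℙ(V > n) ≥ K' · n^{-1/α}` for all `n ≥ 1`, where `V = inf{n ≥ 0 : S_n = -1}` and
`K' ∈ (0,1]`, then for every `n ≥ 1` and every real `x ≥ 1`,
`ℙ(-J_n ≥ x · n^{1/α}) ≤ exp(-K' x / 2)`, where `J_n = min_{0 ≤ k ≤ n} S_k`. -/
theorem stmt_5
    (α : ℝ)
    (Ω : Type) [MeasureSpace Ω] [IsProbabilityMeasure (ℙ : Measure Ω)]
    (ξ : ℕ → Ω → ℤ) (hmeas : ∀ i, Measurable (ξ i))
    (hindep : iIndepFun ξ ℙ)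
    (hident : ∀ i, Measure.map (ξ i) ℙ = Measure.map (ξ 0) ℙ)
    (hstep : ∀ i, ∀ᵐ ω ∂ℙ, -1 ≤ ξ i ω)
    (S : ℕ → Ω → ℤ) (hS : ∀ n ω, S n ω = ∑ i ∈ Finset.range n, ξ i ω)
    (J : ℕ → Ω → ℤ)
    (hJ : ∀ n ω, J n ω = (Finset.range (n + 1)).inf' (by simp) (fun k => S k ω))
    (K' : ℝ) (hK'₀ : 0 < K')
    (hV : ∀ n : ℕ, 1 ≤ n →
      ENNReal.ofReal (K' * (n : ℝ) ^ (-(1 / α))) ≤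
        ℙ {ω | ∀ k : ℕ, k ≤ n → S k ω ≠ -1}) :
    ∀ n : ℕ, 1 ≤ n → ∀ x : ℝ, 1 ≤ x →
      ℙ {ω | x * (n : ℝ) ^ (1 / α) ≤ -(J n ω : ℝ)} ≤
        ENNReal.ofReal (Real.exp (-K' * x / 2)) := by
  intro n hn x hx
  have hident' i : IdentDistrib (ξ i) (ξ 0) ℙ ℙ :=
    ⟨(hmeas i).aemeasurable, (hmeas 0).aemeasurable, hident i⟩
  simp only [hS] at hJ hV
  set y := x * (n : ℝ) ^ (1 / α)
  set c := K' * (n : ℝ) ^ (-(1 / α))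
  have hy : 0 ≤ y := by positivity
  have hcy : c * y = K' * x := by
    have : (n : ℝ) ^ (1 / α) ≠ 0 := by positivity
    simp only [c, y, Real.rpow_neg (Nat.cast_nonneg n)]
    field_simp
  have hsub : {ω | y ≤ -(J n ω : ℝ)} ⊆ (fun ω i ↦ ξ i ω) ⁻¹' walkReaches n (-⌈y⌉₊) := by
    intro ω hω
    rw [Set.mem_preimage, mem_walkReaches_iff_inf'_le, ← hJ, Int.natCast_ceil_eq_ceil hy,
      le_neg, Int.ceil_le]
    exact_mod_cast hω
  have hreach : ℙ ((fun ω i ↦ ξ i ω) ⁻¹' walkReaches n (-1)) ≤ ENNReal.ofReal (1 - c) :=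
    calc _ ≤ 1 - ℙ {ω | ∀ k ≤ n, ∑ i ∈ range k, ξ i ω ≠ -1} :=
          measure_walkReaches_neg_one_le hmeas (ae_all_iff.2 hstep) n
      _ ≤ 1 - ENNReal.ofReal c := tsub_le_tsub_left (hV n hn) 1
      _ = ENNReal.ofReal (1 - c) := by
          rw [ENNReal.ofReal_sub _ (by positivity), ENNReal.ofReal_one]
  calc ℙ {ω | y ≤ -(J n ω : ℝ)} ≤ ℙ ((fun ω i ↦ ξ i ω) ⁻¹' walkReaches n (-⌈y⌉₊)) :=
        measure_mono hsub
    _ ≤ ℙ ((fun ω i ↦ ξ i ω) ⁻¹' walkReaches n (-1)) ^ ⌈y⌉₊ :=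
        measure_walkReaches_le_pow hmeas hindep hident' (ae_all_iff.2 hstep) n _
    _ ≤ ENNReal.ofReal (1 - c) ^ ⌈y⌉₊ := by gcongr
    _ ≤ ENNReal.ofReal (Real.exp (-(c * ⌈y⌉₊))) := ofReal_one_sub_pow_le_ofReal_exp c _
    _ ≤ ENNReal.ofReal (Real.exp (-K' * x / 2)) := by
        have : c * y ≤ c * ⌈y⌉₊ := by gcongr; exact Nat.le_ceil y
        have : 0 ≤ K' * x := by positivity
        gcongr
        linarith
end

section
/- Fix δ ∈ (0, 1/(2α)) and η > 0, and set M = V_1 + ⋯ + V_U (with M = 0 if U = 0). Then n · ℙ( M ≥ η·n^{1/α} and V_i ≤ M − n^{(1/α)−δ} for every i ∈ {1,…,U} ) → 0 as n → ∞. In other words, with probability 1 − o(1/n), if the random sum M exceeds η·n^{1/α} then some single summand V_i exceeds M − n^{(1/α)−δ}. -/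
/-! Cut the geometric number of summands at `u ≈ C log n`, so that `ℙ(U ≥ u) = o(1/n)`.
Below the cut, the event forces two distinct summands among the first `u` to be large:
the largest is at least `M / u ≥ η n^{1/α} / u`, and since it falls short of `M` by
`n^{1/α - δ}`, the largest of the others is at least `n^{1/α - δ} / u`. By pairwise
independence and the tail bound, the probability of this is at most
`u² K² (η n^{1/α} / u)^{-α} (n^{1/α - δ} / u)^{-α} = K² η^{-α} u^{2+2α} n^{-(2 - αδ)}`,
which is `o(1/n)` because `αδ < 1` and `u` is only logarithmic in `n`. -/

open MeasureTheory ProbabilityTheory Filter Finset Real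
open scoped ENNReal Topology

namespace Finset

variable {ι : Type*} {s : Finset ι} {f : ι → ℝ} {c : ℝ}

theorem le_mul_of_le_sum_of_forall_le {T a : ℝ} (hT : 0 < T) (hc : (#s : ℝ) ≤ c)
    (hsum : T ≤ ∑ i ∈ s, f i) (hle : ∀ i ∈ s, f i ≤ a) : T ≤ c * a := by
  have hT_le : T ≤ #s * a := hsum.trans (by simpa using sum_le_card_nsmul s f a hle)
  have ha : 0 < a := pos_of_mul_pos_right (hT.trans_le hT_le) (Nat.cast_nonneg _)
  exact hT_le.trans (mul_le_mul_of_nonneg_right hc ha.le)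

theorem exists_ne_le_mul_of_le_sum [DecidableEq ι] {T₁ T₂ : ℝ} (hT₁ : 0 < T₁) (hT₂ : 0 < T₂)
    (hc : (#s : ℝ) ≤ c) (hsum : T₁ ≤ ∑ i ∈ s, f i) (hle : ∀ i ∈ s, f i ≤ ∑ j ∈ s, f j - T₂) :
    ∃ i ∈ s, ∃ j ∈ s, i ≠ j ∧ T₁ ≤ c * f i ∧ T₂ ≤ c * f j := by
  obtain ⟨i, hi, hi_max⟩ := s.exists_max_image f (nonempty_of_sum_ne_zero (f := f) (by linarith))
  have hrest : T₂ ≤ ∑ j ∈ s.erase i, f j := by rw [sum_erase_eq_sub hi]; linarith [hle i hi]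
  obtain ⟨j, hj, hj_max⟩ :=
    (s.erase i).exists_max_image f (nonempty_of_sum_ne_zero (f := f) (by linarith))
  have hc' : (#(s.erase i) : ℝ) ≤ c := le_trans (by exact_mod_cast card_erase_le) hc
  exact ⟨i, hi, j, mem_of_mem_erase hj, (ne_of_mem_erase hj).symm,
    le_mul_of_le_sum_of_forall_le hT₁ hc hsum hi_max,
    le_mul_of_le_sum_of_forall_le hT₂ hc' hrest hj_max⟩

end Finset

section Tails

variable {Ω : Type*} [MeasurableSpace Ω] {μ : Measure Ω}

theorem measure_le_le_pow_of_geometric {U : Ω → ℕ} {β : ℝ} (hβ₀ : 0 < β) (hβ₁ : β ≤ 1)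
    (hU : ∀ k : ℕ, μ {ω | U ω = k} = ENNReal.ofReal (β * (1 - β) ^ k)) (m : ℕ) :
    μ {ω | m ≤ U ω} ≤ ENNReal.ofReal ((1 - β) ^ m) := by
  have hr₀ : 0 ≤ 1 - β := by linarith
  have hr₁ : 1 - β < 1 := by linarith
  have hsplit : {ω | m ≤ U ω} = ⋃ k : ℕ, {ω | U ω = m + k} := by
    ext ω
    simp only [Set.mem_ofPred_eq, Set.mem_iUnion]
    exact ⟨fun h => ⟨U ω - m, by omega⟩, fun ⟨k, hk⟩ => by omega⟩
  have hgeom : HasSum (fun k : ℕ => β * (1 - β) ^ (m + k)) ((1 - β) ^ m) := by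
    have := (hasSum_geometric_of_lt_one hr₀ hr₁).mul_left (β * (1 - β) ^ m)
    rw [sub_sub_cancel, mul_right_comm, mul_inv_cancel₀ hβ₀.ne', one_mul] at this
    simpa only [pow_add, mul_assoc] using this
  calc μ {ω | m ≤ U ω} ≤ ∑' k : ℕ, μ {ω | U ω = m + k} := hsplit ▸ measure_iUnion_le _
    _ = ENNReal.ofReal ((1 - β) ^ m) := by
      simp_rw [hU, ← ENNReal.ofReal_tsum_of_nonneg (fun k => by positivity) hgeom.summable,
        hgeom.tsum_eq]

theorem measure_le_cast_le_of_tail {X : Ω → ℕ} {K α : ℝ} (hK : 0 ≤ K) (hα : 0 ≤ α)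
    (htail : ∀ k : ℕ, 1 ≤ k → μ {ω | k ≤ X ω} ≤ ENNReal.ofReal (K * (k : ℝ) ^ (-α)))
    {x : ℝ} (hx : 0 < x) :
    μ {ω | x ≤ (X ω : ℝ)} ≤ ENNReal.ofReal (K * x ^ (-α)) := by
  have hset : {ω | x ≤ (X ω : ℝ)} = {ω | ⌈x⌉₊ ≤ X ω} := by
    ext ω; exact (Nat.ceil_le (a := x)).symm
  rw [hset]
  refine (htail _ (Nat.one_le_iff_ne_zero.2 (Nat.ceil_pos.2 hx).ne')).trans ?_
  exact ENNReal.ofReal_le_ofReal <| mul_le_mul_of_nonneg_left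
    (rpow_le_rpow_of_nonpos hx (Nat.le_ceil x) (neg_nonpos.2 hα)) hK

theorem measure_le_sum_and_forall_le_sum_sub_le (U : Ω → ℕ) (V : ℕ → Ω → ℝ) {T₁ T₂ : ℝ}
    (hT₁ : 0 < T₁) (hT₂ : 0 < T₂) (u : ℕ) {B : ℝ≥0∞}
    (hB : ∀ i j, i ≠ j → μ ({ω | T₁ / u ≤ V i ω} ∩ {ω | T₂ / u ≤ V j ω}) ≤ B) :
    μ {ω | T₁ ≤ ∑ i ∈ range (U ω), V i ω ∧
        ∀ i < U ω, V i ω ≤ ∑ j ∈ range (U ω), V j ω - T₂}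
      ≤ μ {ω | u ≤ U ω} + u ^ 2 * B := by
  have hsub : {ω | T₁ ≤ ∑ i ∈ range (U ω), V i ω ∧
        ∀ i < U ω, V i ω ≤ ∑ j ∈ range (U ω), V j ω - T₂}
      ⊆ {ω | u ≤ U ω} ∪ ⋃ q ∈ (range u).offDiag,
          {ω | T₁ / u ≤ V q.1 ω} ∩ {ω | T₂ / u ≤ V q.2 ω} := by
    rintro ω ⟨hsum, hle⟩
    rcases le_or_gt u (U ω) with hUu | hUu
    · exact Or.inl hUu
    have hu : (0 : ℝ) < u := by exact_mod_cast (Nat.zero_le _).trans_lt hUu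
    obtain ⟨i, hi, j, hj, hij, hTi, hTj⟩ := exists_ne_le_mul_of_le_sum (c := u) hT₁ hT₂
      (by rw [card_range]; exact_mod_cast hUu.le) hsum fun i hi => hle i (mem_range.1 hi)
    simp only [Set.mem_union, Set.mem_iUnion, mem_offDiag, mem_range]
    exact Or.inr ⟨(i, j), ⟨(mem_range.1 hi).trans hUu, (mem_range.1 hj).trans hUu, hij⟩,
      (div_le_iff₀' hu).2 hTi, (div_le_iff₀' hu).2 hTj⟩
  have hcard : (#(range u).offDiag : ℝ≥0∞) ≤ u ^ 2 := by
    rw [offDiag_card, card_range, sq]; exact_mod_cast Nat.sub_le _ _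
  calc _ ≤ μ {ω | u ≤ U ω} + ∑ q ∈ (range u).offDiag,
          μ ({ω | T₁ / u ≤ V q.1 ω} ∩ {ω | T₂ / u ≤ V q.2 ω}) :=
        (measure_mono hsub).trans <|
          (measure_union_le _ _).trans (add_le_add le_rfl (measure_biUnion_finset_le _ _))
    _ ≤ μ {ω | u ≤ U ω} + #(range u).offDiag * B := by
        rw [← nsmul_eq_mul]
        exact add_le_add le_rfl
          (sum_le_card_nsmul _ _ B fun q hq => hB q.1 q.2 (mem_offDiag.1 hq).2.2)
    _ ≤ μ {ω | u ≤ U ω} + u ^ 2 * B :=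
        add_le_add le_rfl (mul_le_mul_left hcard _)

theorem measure_inter_cast_le_le_of_indepFun {Ω' : Type*} [MeasurableSpace Ω']
    {ν : Measure Ω'} {X Y : Ω → ℕ} {Z : Ω' → ℕ} {K α x y : ℝ} (hK : 0 ≤ K) (hα : 0 ≤ α)
    (hXY : IndepFun X Y μ) (hX : IdentDistrib X Z μ ν) (hY : IdentDistrib Y Z μ ν)
    (hZ : ∀ k : ℕ, 1 ≤ k → ν {ω | k ≤ Z ω} ≤ ENNReal.ofReal (K * (k : ℝ) ^ (-α)))
    (hx : 0 < x) (hy : 0 < y) :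
    μ ({ω | x ≤ (X ω : ℝ)} ∩ {ω | y ≤ (Y ω : ℝ)})
      ≤ ENNReal.ofReal (K * x ^ (-α) * (K * y ^ (-α))) := by
  have htail {W : Ω → ℕ} (hW : IdentDistrib W Z μ ν) {t : ℝ} (ht : 0 < t) :
      μ (W ⁻¹' {k : ℕ | t ≤ k}) ≤ ENNReal.ofReal (K * t ^ (-α)) := by
    rw [hW.measure_mem_eq .of_discrete]
    exact measure_le_cast_le_of_tail hK hα hZ ht
  rw [ENNReal.ofReal_mul (by positivity)]
  exact (hXY.measure_inter_preimage_eq_mul _ _ .of_discrete .of_discrete).trans_le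
    (mul_le_mul' (htail hX hx) (htail hY hy))

end Tails

theorem natCast_mul_pow_le_inv {r : ℝ} (hr₀ : 0 < r) (hr₁ : r < 1) (n : ℕ) :
    (n : ℝ) * r ^ (⌈2 / -log r * log n⌉₊ + 1) ≤ (n : ℝ)⁻¹ := by
  rcases n.eq_zero_or_pos with rfl | hn
  · simp
  have hn' : (0 : ℝ) < n := by exact_mod_cast hn
  have hlog : 0 < -log r := neg_pos.2 (log_neg hr₀ hr₁)
  have hexp : ((⌈2 / -log r * log n⌉₊ + 1 : ℕ) : ℝ) * log r ≤ -2 * log n := by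
    have h : 2 / -log r * log n ≤ ((⌈2 / -log r * log n⌉₊ + 1 : ℕ) : ℝ) := by
      push_cast; linarith [Nat.le_ceil (2 / -log r * log n)]
    have h2 : 2 / -log r * log n * -log r = 2 * log n := by
      rw [div_mul_eq_mul_div, div_mul_cancel₀ _ hlog.ne']
    nlinarith [mul_le_mul_of_nonneg_right h hlog.le]
  calc (n : ℝ) * r ^ (⌈2 / -log r * log n⌉₊ + 1)
      = exp (log n) * exp (((⌈2 / -log r * log n⌉₊ + 1 : ℕ) : ℝ) * log r) := by
        rw [exp_log hn', exp_nat_mul, exp_log hr₀]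
    _ ≤ exp (log n) * exp (-2 * log n) := by gcongr
    _ = (n : ℝ)⁻¹ := by rw [← exp_add, ← exp_log (inv_pos.2 hn'), log_inv]; ring_nf

theorem tendsto_ceil_mul_log_rpow_mul_rpow_neg {C p c : ℝ} (hC : 0 ≤ C) (hp : 0 ≤ p)
    (hc : 0 < c) :
    Tendsto (fun n : ℕ => ((⌈C * log n⌉₊ + 1 : ℕ) : ℝ) ^ p * (n : ℝ) ^ (-c)) atTop (𝓝 0) := by
  have hlim : Tendsto (fun x : ℝ => (C + 2) ^ p * (log x ^ p / x ^ c)) atTop (𝓝 0) := by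
    simpa using ((isLittleO_log_rpow_rpow_atTop p hc).tendsto_div_nhds_zero).const_mul
      ((C + 2) ^ p)
  refine squeeze_zero' (Eventually.of_forall fun n => by positivity) ?_
    (hlim.comp tendsto_natCast_atTop_atTop)
  filter_upwards [tendsto_natCast_atTop_atTop.eventually
    (tendsto_log_atTop.eventually_ge_atTop 1)] with n hn
  have hn₀ : (0 : ℝ) < n :=
    Nat.cast_pos.2 (Nat.pos_of_ne_zero (by rintro rfl; norm_num at hn))
  have hu : ((⌈C * log n⌉₊ + 1 : ℕ) : ℝ) ≤ (C + 2) * log n := by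
    push_cast
    nlinarith [Nat.ceil_lt_add_one (mul_nonneg hC (zero_le_one.trans hn))]
  calc ((⌈C * log n⌉₊ + 1 : ℕ) : ℝ) ^ p * (n : ℝ) ^ (-c)
      ≤ ((C + 2) * log n) ^ p * (n : ℝ) ^ (-c) := by gcongr
    _ = (C + 2) ^ p * (log n ^ p / (n : ℝ) ^ c) := by
        rw [mul_rpow (by linarith) (by linarith), rpow_neg hn₀.le]; ring

theorem exists_tendsto_natCast_mul_pow_and_rpow_mul_rpow_neg {r p c : ℝ} (hr₀ : 0 < r)
    (hr₁ : r < 1) (hp : 0 ≤ p) (hc : 0 < c) :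
    ∃ u : ℕ → ℕ, (∀ n, 0 < u n) ∧ Tendsto (fun n : ℕ => (n : ℝ) * r ^ u n) atTop (𝓝 0) ∧
      Tendsto (fun n : ℕ => (u n : ℝ) ^ p * (n : ℝ) ^ (-c)) atTop (𝓝 0) :=
  ⟨fun n => ⌈2 / -log r * log n⌉₊ + 1, fun _ => Nat.succ_pos _,
    squeeze_zero (fun n => by positivity) (natCast_mul_pow_le_inv hr₀ hr₁)
      tendsto_inv_atTop_nhds_zero_nat,
    tendsto_ceil_mul_log_rpow_mul_rpow_neg
      (div_nonneg zero_le_two (neg_nonneg.2 (log_nonpos hr₀.le hr₁.le))) hp hc⟩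

theorem mul_sq_mul_rpow_neg_mul_rpow_neg_eq {α δ η K x u : ℝ} (hα : α ≠ 0) (hη : 0 < η)
    (hx : 0 < x) (hu : 0 < u) :
    x * (u ^ 2 * (K * (η * x ^ (1 / α) / u) ^ (-α) * (K * (x ^ (1 / α - δ) / u) ^ (-α))))
      = K ^ 2 * η ^ (-α) * (u ^ (2 + 2 * α) * x ^ (-(1 - α * δ))) := by
  have h₁ : (x ^ (1 / α)) ^ (-α) = x⁻¹ := by
    rw [← rpow_mul hx.le, one_div, mul_neg, inv_mul_cancel₀ hα, rpow_neg_one]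
  have h₂ : (x ^ (1 / α - δ)) ^ (-α) = x ^ (-(1 - α * δ)) := by
    rw [← rpow_mul hx.le]; congr 1; field_simp
  have h₃ : u ^ (2 + 2 * α) = u ^ 2 * u ^ α * u ^ α := by
    rw [rpow_add hu, two_mul, rpow_add hu, rpow_two]; ring
  rw [div_rpow (by positivity) hu.le, div_rpow (by positivity) hu.le,
    mul_rpow hη.le (by positivity), h₁, h₂, h₃, rpow_neg hu.le]
  field_simp

theorem stmt_9_general
    (β : ℝ) (hβ₀ : 0 < β) (hβ₁ : β < 1)
    (α : ℝ) (hα₁ : 1 < α)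
    (Ω : Type) [MeasureSpace Ω]
    (U : Ω → ℕ)
    (V : ℕ → Ω → ℕ) (hVmeas : ∀ i, Measurable (V i))
    (hindep : iIndepFun
      (fun o : Option ℕ => Option.elim o U V) ℙ)
    (hident : ∀ i, Measure.map (V i) ℙ = Measure.map (V 0) ℙ)
    (hU : ∀ k : ℕ, ℙ {ω | U ω = k} = ENNReal.ofReal (β * (1 - β) ^ k))
    (K : ℝ) (hK : ∀ k : ℕ, 1 ≤ k →
      ℙ {ω | k ≤ V 0 ω} ≤ ENNReal.ofReal (K * (k : ℝ) ^ (-α)))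
    (M : Ω → ℕ) (hM : ∀ ω, M ω = ∑ i ∈ Finset.range (U ω), V i ω)
    (δ : ℝ) (hδ₁ : δ < 1 / (2 * α))
    (η : ℝ) (hη : 0 < η) :
    Tendsto (fun n : ℕ => (n : ℝ) *
        (ℙ {ω | η * (n : ℝ) ^ (1 / α) ≤ (M ω : ℝ) ∧
            ∀ i : ℕ, i < U ω → (V i ω : ℝ) ≤ (M ω : ℝ) - (n : ℝ) ^ (1 / α - δ)}).toReal)
      atTop (nhds 0) := by
  have hα₀ : 0 < α := by linarith
  have hK' (k : ℕ) (hk : 1 ≤ k) :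
      ℙ {ω | k ≤ V 0 ω} ≤ ENNReal.ofReal (max K 0 * (k : ℝ) ^ (-α)) :=
    (hK k hk).trans <| ENNReal.ofReal_le_ofReal <|
      mul_le_mul_of_nonneg_right (le_max_left K 0) (by positivity)
  have hV (i : ℕ) : IdentDistrib (V i) (V 0) ℙ ℙ :=
    ⟨(hVmeas i).aemeasurable, (hVmeas 0).aemeasurable, hident i⟩
  obtain ⟨u, hu₀, hu_geom, hu_pow⟩ :=
    exists_tendsto_natCast_mul_pow_and_rpow_mul_rpow_neg (p := 2 + 2 * α) (c := 1 - α * δ)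
      (by linarith : 0 < 1 - β) (by linarith) (by linarith)
      (by rw [lt_div_iff₀ (by positivity)] at hδ₁; linarith)
  have hlim := hu_geom.add (hu_pow.const_mul (max K 0 ^ 2 * η ^ (-α)))
  rw [mul_zero, add_zero] at hlim
  refine squeeze_zero' (Eventually.of_forall fun n => by positivity)
    ((eventually_gt_atTop 0).mono fun n hn => ?_) hlim
  have hn' : (0 : ℝ) < n := by exact_mod_cast hn
  have hu : (0 : ℝ) < u n := by exact_mod_cast hu₀ n
  have hT₁ : 0 < η * (n : ℝ) ^ (1 / α) := by positivity
  have hT₂ : 0 < (n : ℝ) ^ (1 / α - δ) := by positivity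
  have hE := measure_le_sum_and_forall_le_sum_sub_le U (fun i ω => (V i ω : ℝ)) hT₁ hT₂ (u n)
    fun i j hij => measure_inter_cast_le_le_of_indepFun (le_max_right K 0) hα₀.le
      (hindep.indepFun (i := some i) (j := some j) (by simpa using hij)) (hV i) (hV j) hK'
      (div_pos hT₁ hu) (div_pos hT₂ hu)
  simp only [← Nat.cast_sum, ← hM] at hE
  rw [← mul_sq_mul_rpow_neg_mul_rpow_neg_eq hα₀.ne' hη hn' hu, ← mul_add]
  refine mul_le_mul_of_nonneg_left (ENNReal.toReal_le_of_le_ofReal (by positivity)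
    (hE.trans ?_)) hn'.le
  rw [ENNReal.ofReal_add (by positivity) (by positivity),
    ENNReal.ofReal_mul (sq_nonneg (u n : ℝ)), ENNReal.ofReal_pow (Nat.cast_nonneg _),
    ENNReal.ofReal_natCast]
  exact add_le_add (measure_le_le_pow_of_geometric hβ₀ hβ₁.le hU (u n)) le_rfl

/-- Let `U` be geometric with parameter `β`, let `(V_i)` be identically
distributed `ℕ`-valued random variables with `ℙ(V_1 ≥ k) ≤ K·k^{-α}`, the family
`U, V_1, V_2, …` being independent, and set `M = V_1 + ⋯ + V_U`. For fixed
`δ ∈ (0, 1/(2α))` and `η > 0`,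
`n · ℙ(M ≥ η·n^{1/α} and V_i ≤ M - n^{1/α - δ} for every i ≤ U) → 0` as `n → ∞`. -/
theorem stmt_9
    (β : ℝ) (hβ₀ : 0 < β) (hβ₁ : β < 1)
    (α : ℝ) (hα₁ : 1 < α) (hα₂ : α < 2)
    (Ω : Type) [MeasureSpace Ω] [IsProbabilityMeasure (ℙ : Measure Ω)]
    (U : Ω → ℕ) (hUmeas : Measurable U)
    (V : ℕ → Ω → ℕ) (hVmeas : ∀ i, Measurable (V i))
    (hindep : iIndepFun
      (fun o : Option ℕ => Option.elim o U V) ℙ)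
    (hident : ∀ i, Measure.map (V i) ℙ = Measure.map (V 0) ℙ)
    (hU : ∀ k : ℕ, ℙ {ω | U ω = k} = ENNReal.ofReal (β * (1 - β) ^ k))
    (K : ℝ) (hK : ∀ k : ℕ, 1 ≤ k →
      ℙ {ω | k ≤ V 0 ω} ≤ ENNReal.ofReal (K * (k : ℝ) ^ (-α)))
    (M : Ω → ℕ) (hM : ∀ ω, M ω = ∑ i ∈ Finset.range (U ω), V i ω)
    (δ : ℝ) (hδ₀ : 0 < δ) (hδ₁ : δ < 1 / (2 * α))
    (η : ℝ) (hη : 0 < η) :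
    Tendsto (fun n : ℕ => (n : ℝ) *
        (ℙ {ω | η * (n : ℝ) ^ (1 / α) ≤ (M ω : ℝ) ∧
            ∀ i : ℕ, i < U ω → (V i ω : ℝ) ≤ (M ω : ℝ) - (n : ℝ) ^ (1 / α - δ)}).toReal)
      atTop (nhds 0) :=
  stmt_9_general β hβ₀ hβ₁ α hα₁ Ω U V hVmeas hindep hident hU K hK M hM δ hδ₁ η hη
end

section
/- For every k the tail sum μ̄₁(k) = ∑_{j≥k} μ₁(j) is finite, and as k → ∞, k^α · μ̄₁(k) converges to 2c/(α·(1−β)·√π); that is, μ̄₁(k) ~ (2c/(α(1−β)√π)) · k^{−α}. -/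
/-!
If `f k · k^(s+1) → C` with `s > 0`, then `k^s · ∑_{j ≥ k} f j → C / s`: for the pure power
`k^(-(s+1))` this is the integral test, and the remainder `f k - C k^(-(s+1))`, being
`o(k^(-(s+1)))` with a nonnegative comparison sequence, has tails that are `o` of the tails of the
power. Wallis' product gives `4^(-k) binom(2k+1, k) ~ 2 / √(π k)`, so
`μ₁ k ~ (2c / ((1-β)√π)) k^(-(α+1))` because `a + 1/2 = α + 1`, and the theorem is the case `s = α`.
-/

open Filter Asymptotics Real Topology Set
open scoped Nat

lemma Asymptotics.IsLittleO.tsum_nat_add {E : Type*} [NormedAddCommGroup E] {f : ℕ → E}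
    {g : ℕ → ℝ} (hg : ∀ n, 0 ≤ g n) (hgs : Summable g) (h : f =o[atTop] g) :
    (fun k => ∑' j, f (k + j)) =o[atTop] fun k => ∑' j, g (k + j) := by
  refine IsLittleO.of_bound fun ε hε => ?_
  obtain ⟨N, hN⟩ := eventually_atTop.1 (h.bound hε)
  filter_upwards [eventually_ge_atTop N] with k hk
  have hgk : HasSum (fun j => ε * g (k + j)) (ε * ∑' j, g (k + j)) :=
    (hgs.comp_injective (add_right_injective k)).hasSum.mul_left ε
  refine (tsum_of_norm_bounded hgk fun j => ?_).trans ?_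
  · simpa [abs_of_nonneg (hg _)] using hN (k + j) (by omega)
  · exact mul_le_mul_of_nonneg_left (le_norm_self _) hε.le

lemma tsum_nat_add_rpow_bounds {s : ℝ} (hs : 0 < s) {N : ℕ} (hN : 1 ≤ N) :
    (N : ℝ) ^ (-s) / s ≤ ∑' j : ℕ, ((N + j : ℕ) : ℝ) ^ (-(s + 1)) ∧
      ∑' j : ℕ, ((N + 1 + j : ℕ) : ℝ) ^ (-(s + 1)) ≤ (N : ℝ) ^ (-s) / s := by
  have hN0 : (0 : ℝ) < N := by exact_mod_cast hN
  have hanti : AntitoneOn (fun x : ℝ => x ^ (-(s + 1))) (Ici (N : ℝ)) :=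
    (antitoneOn_rpow_Ioi_of_exponent_nonpos (by linarith)).mono fun x hx => hN0.trans_le hx
  have hnonneg (x : ℝ) (hx : x ∈ Ioi (N : ℝ)) : 0 ≤ x ^ (-(s + 1)) :=
    rpow_nonneg (hN0.trans hx).le _
  have hint : ∫ x in Ioi (N : ℝ), x ^ (-(s + 1)) = (N : ℝ) ^ (-s) / s := by
    rw [integral_Ioi_rpow_of_lt (by linarith) hN0]
    ring_nf
  constructor
  · have := hanti.integral_le_tsum_comp_add N (Real.summable_nat_rpow.2 (by linarith)) hnonneg
    simpa only [hint, add_comm] using this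
  · have := hanti.tsum_comp_add_le_integral N
      (integrableOn_Ioi_rpow_of_lt (by linarith) hN0) hnonneg
    rw [hint] at this
    convert this using 5 with j
    ring

lemma tendsto_rpow_mul_tsum_nat_add_rpow {s : ℝ} (hs : 0 < s) :
    Tendsto (fun k : ℕ => (k : ℝ) ^ s * ∑' j : ℕ, ((k + j : ℕ) : ℝ) ^ (-(s + 1))) atTop
      (𝓝 (1 / s)) := by
  rw [← tendsto_add_atTop_iff_nat 1]
  have hupper : Tendsto (fun k : ℕ => (((k + 1 : ℕ) : ℝ) / k) ^ s / s) atTop (𝓝 (1 / s)) := by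
    have h := ((tendsto_natCast_div_add_atTop (1 : ℝ)).inv₀ one_ne_zero).rpow_const
      (p := s) (Or.inl (inv_ne_zero one_ne_zero)) |>.div_const s
    simpa [inv_div] using h
  refine tendsto_of_tendsto_of_tendsto_of_le_of_le' tendsto_const_nhds hupper ?_ ?_
  · filter_upwards with k
    have hk : (0 : ℝ) < (k + 1 : ℕ) := by positivity
    have h := (tsum_nat_add_rpow_bounds hs (Nat.le_add_left 1 k)).1
    calc 1 / s = ((k + 1 : ℕ) : ℝ) ^ s * (((k + 1 : ℕ) : ℝ) ^ (-s) / s) := by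
          rw [mul_div_assoc', ← rpow_add hk, add_neg_cancel, rpow_zero]
      _ ≤ _ := mul_le_mul_of_nonneg_left h (by positivity)
  · filter_upwards [eventually_ge_atTop 1] with k hk
    have hk0 : (0 : ℝ) < k := by exact_mod_cast hk
    have h := (tsum_nat_add_rpow_bounds hs hk).2
    calc _ ≤ ((k + 1 : ℕ) : ℝ) ^ s * ((k : ℝ) ^ (-s) / s) :=
          mul_le_mul_of_nonneg_left h (by positivity)
      _ = _ := by rw [div_rpow (by positivity) hk0.le, rpow_neg hk0.le]; ring

theorem tendsto_rpow_mul_tsum_nat_add {f : ℕ → ℝ} {s C : ℝ} (hs : 0 < s)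
    (hf : Tendsto (fun k : ℕ => (k : ℝ) ^ (s + 1) * f k) atTop (𝓝 C)) :
    Summable f ∧ Tendsto (fun k : ℕ => (k : ℝ) ^ s * ∑' j, f (k + j)) atTop (𝓝 (C / s)) := by
  set g : ℕ → ℝ := fun n => (n : ℝ) ^ (-(s + 1))
  have hg : ∀ n, 0 ≤ g n := fun n => rpow_nonneg n.cast_nonneg _
  have hgs : Summable g := Real.summable_nat_rpow.2 (by linarith)
  have hrem : (fun n => f n - C * g n) =o[atTop] g := by
    have h := (isLittleO_one_iff ℝ).2 (tendsto_sub_nhds_zero_iff.2 hf)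
    refine (h.mul_isBigO (isBigO_refl g atTop)).congr' ?_ (by simp)
    filter_upwards [eventually_ge_atTop 1] with k hk
    have hk0 : (0 : ℝ) < k := by exact_mod_cast hk
    simp only [g, sub_mul, mul_right_comm _ (f k), ← rpow_add hk0, add_neg_cancel, rpow_zero,
      one_mul]
  have hfs : Summable f := by
    simpa using (summable_of_isBigO_nat hgs hrem.isBigO).add (hgs.mul_left C)
  refine ⟨hfs, ?_⟩
  have hG := tendsto_rpow_mul_tsum_nat_add_rpow hs
  have herr : Tendsto (fun k : ℕ => (k : ℝ) ^ s * ∑' j, (f (k + j) - C * g (k + j))) atTop (𝓝 0) :=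
    (isLittleO_one_iff ℝ).1 <|
      ((isBigO_refl (fun k : ℕ => (k : ℝ) ^ s) atTop).mul_isLittleO
        (hrem.tsum_nat_add hg hgs)).trans_isBigO (hG.isBigO_one ℝ)
  convert herr.add (hG.const_mul C) using 2 with k
  · have hshift {u : ℕ → ℝ} (hu : Summable u) : Summable fun j => u (k + j) :=
      hu.comp_injective (add_right_injective k)
    rw [(hshift hfs).tsum_sub ((hshift hgs).mul_left C), tsum_mul_left]
    ring
  · ring

lemma Nat.centralBinom_mul_factorial_mul_factorial (n : ℕ) :
    n.centralBinom * n ! * n ! = (2 * n)! := by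
  simpa [two_mul, Nat.centralBinom_eq_two_mul_choose] using
    Nat.choose_mul_factorial_mul_factorial (Nat.le_add_left n n)

lemma tendsto_sqrt_mul_centralBinom_div_four_pow :
    Tendsto (fun n : ℕ => √n * n.centralBinom / 4 ^ n) atTop (𝓝 (1 / √π)) := by
  have hWallis (n : ℕ) :
      (n * n.centralBinom ^ 2 / 16 ^ n : ℝ) = n / (2 * n + 1) / Wallis.W n := by
    have hfact : (n.centralBinom * n ! * n ! : ℝ) = (2 * n)! := by
      exact_mod_cast n.centralBinom_mul_factorial_mul_factorial
    rw [Wallis.W_eq_factorial_ratio, ← hfact, pow_mul]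
    field_simp
    ring
  have hsq : Tendsto (fun n : ℕ => (n * n.centralBinom ^ 2 / 16 ^ n : ℝ)) atTop (𝓝 (1 / π)) := by
    simp_rw [hWallis, show 1 / π = 1 / 2 / (π / 2) by field_simp]
    exact Stirling.tendsto_self_div_two_mul_self_add_one.div Wallis.tendsto_W_nhds_pi_div_two
      (by positivity)
  convert hsq.sqrt using 2 with n
  · rw [sqrt_div' _ (by positivity), sqrt_mul' _ (by positivity), sqrt_sq (by positivity),
      show (16 : ℝ) ^ n = (4 ^ n) ^ 2 by rw [← pow_mul, mul_comm, pow_mul]; norm_num,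
      sqrt_sq (by positivity)]
  · rw [sqrt_div' _ pi_pos.le, Real.sqrt_one]

lemma tendsto_two_mul_add_one_div_add_one :
    Tendsto (fun k : ℕ => (2 * k + 1 : ℝ) / (k + 1)) atTop (𝓝 2) := by
  have h := (tendsto_one_div_add_atTop_nhds_zero_nat (𝕜 := ℝ)).const_sub 2
  rw [sub_zero] at h
  refine h.congr fun k => ?_
  field_simp
  ring

lemma tendsto_sqrt_mul_choose_two_mul_add_one_div_four_pow :
    Tendsto (fun k : ℕ => √k * ((2 * k + 1).choose k : ℝ) / 4 ^ k) atTop (𝓝 (2 / √π)) := by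
  have hchoose (k : ℕ) : ((2 * k + 1).choose k : ℝ) = k.centralBinom * ((2 * k + 1) / (k + 1)) := by
    have h := Nat.choose_mul_succ_eq (2 * k) k
    rw [← Nat.centralBinom_eq_two_mul_choose, show 2 * k + 1 - k = k + 1 by omega] at h
    rw [mul_div_assoc', eq_div_iff (by positivity)]
    exact_mod_cast h.symm
  have h := tendsto_sqrt_mul_centralBinom_div_four_pow.mul tendsto_two_mul_add_one_div_add_one
  rw [one_div_mul_eq_div] at h
  refine h.congr fun k => ?_
  rw [hchoose]
  ring

lemma Filter.Tendsto.rpow_mul_comp_add_one {u : ℕ → ℝ} {a L : ℝ}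
    (h : Tendsto (fun k : ℕ => (k : ℝ) ^ a * u k) atTop (𝓝 L)) :
    Tendsto (fun k : ℕ => (k : ℝ) ^ a * u (k + 1)) atTop (𝓝 L) := by
  have hratio : Tendsto (fun k : ℕ => ((k : ℝ) / (k + 1)) ^ a) atTop (𝓝 1) := by
    simpa using (tendsto_natCast_div_add_atTop (1 : ℝ)).rpow_const (Or.inl one_ne_zero)
  have hshift := (tendsto_add_atTop_iff_nat 1).2 h
  simpa using (hratio.mul hshift).congr fun k => by
    push_cast
    rw [div_rpow (Nat.cast_nonneg k) (by positivity)]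
    field_simp

theorem stmt_12_general
    (a : ℝ) (ha₁ : 3 / 2 < a)
    (α : ℝ) (hα : α = a - 1 / 2)
    (q : ℕ → ℝ)
    (hasymp : Tendsto (fun k : ℕ => (k : ℝ) ^ a * q k) atTop (nhds 1))
    (c β : ℝ)
    (μ₁ : ℕ → ℝ)
    (hμ₁ : ∀ k : ℕ, μ₁ k =
      c / (1 - β) * (1 / 4 : ℝ) ^ k * ((2 * k + 1).choose k : ℝ) * q (k + 1)) :
    (∀ k : ℕ, Summable (fun j : ℕ => μ₁ (k + j))) ∧
    Tendsto (fun k : ℕ => (k : ℝ) ^ α * ∑' j : ℕ, μ₁ (k + j)) atTop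
      (nhds (2 * c / (α * (1 - β) * Real.sqrt Real.pi))) := by
  have hμ₁_asymp : Tendsto (fun k : ℕ => (k : ℝ) ^ (α + 1) * μ₁ k) atTop
      (𝓝 (c / (1 - β) * (2 / √π * 1))) := by
    refine ((tendsto_sqrt_mul_choose_two_mul_add_one_div_four_pow.mul
      hasymp.rpow_mul_comp_add_one).const_mul _).congr fun k => ?_
    rw [hμ₁, hα, show a - 1 / 2 + 1 = 1 / 2 + a by ring,
      rpow_add' k.cast_nonneg (by linarith), ← sqrt_eq_rpow, one_div, inv_pow]
    ring
  obtain ⟨hsum, hlim⟩ := tendsto_rpow_mul_tsum_nat_add (by linarith) hμ₁_asymp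
  refine ⟨fun k => hsum.comp_injective (add_right_injective k), ?_⟩
  convert hlim using 2
  simp only [div_eq_mul_inv, mul_inv]
  ring

/-- With `a ∈ (3/2, 5/2)`, `α = a - 1/2`, `q°_k ~ k^{-a}`, `c > 0`,
`β ∈ (0,1)` and `μ₁(k) = (c/(1-β)) · 4^{-k} · binom(2k+1, k) · q°_{k+1}`, the tail sums
`μ̄₁(k) = ∑_{j ≥ k} μ₁(j)` are finite and `k^α · μ̄₁(k) → 2c/(α·(1-β)·√π)` as `k → ∞`. -/
theorem stmt_12
    (a : ℝ) (ha₁ : 3 / 2 < a) (ha₂ : a < 5 / 2)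
    (α : ℝ) (hα : α = a - 1 / 2)
    (q : ℕ → ℝ) (hq : ∀ k : ℕ, 1 ≤ k → 0 ≤ q k)
    (hasymp : Tendsto (fun k : ℕ => (k : ℝ) ^ a * q k) atTop (nhds 1))
    (c β : ℝ) (hc : 0 < c) (hβ₀ : 0 < β) (hβ₁ : β < 1)
    (μ₁ : ℕ → ℝ)
    (hμ₁ : ∀ k : ℕ, μ₁ k =
      c / (1 - β) * (1 / 4 : ℝ) ^ k * ((2 * k + 1).choose k : ℝ) * q (k + 1)) :
    (∀ k : ℕ, Summable (fun j : ℕ => μ₁ (k + j))) ∧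
    Tendsto (fun k : ℕ => (k : ℝ) ^ α * ∑' j : ℕ, μ₁ (k + j)) atTop
      (nhds (2 * c / (α * (1 - β) * Real.sqrt Real.pi))) :=
  stmt_12_general a ha₁ α hα q hasymp c β μ₁ hμ₁
end

section
/- There exists a finite constant K such that for all integers k ≥ 1 and ℓ ≥ 1, ℙ(J_k > −ℓ) ≤ K · ℓ · k^{−1/α}, where J_k = min_{0≤j≤k} S_j. -/
open MeasureTheory ProbabilityTheory Filter

/-!
The function `h(z) = (ℓ + min z (m - 1))⁺` is a Lyapunov function for the walk killed when it
leaves the strip `(-ℓ, m - 1)`: since the jumps are `≥ -1` and centred, every step taken inside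
the strip lowers `E h` by at least `δ = E (ξ - (m + ℓ - 2))⁺`, while an exit upwards lands where
`h ≥ m`. Starting from `h 0 = ℓ`, the walk therefore stays in the strip up to time `k` with
probability at most `ℓ / (δ k)` and exits upwards with probability at most `ℓ / m`; an exit
downwards means `J_k ≤ -ℓ`. For `m ≈ k^{1/α}` the tail assumption gives
`δ ≥ m ν[3m, ∞) ≳ m / k`, so both terms are `O(ℓ k^{-1/α})`.
-/

theorem ProbabilityTheory.IndepFun.integral_comp_eq_integral_integral
    {Ω β γ : Type*} [MeasurableSpace Ω] {μ : Measure Ω} [IsFiniteMeasure μ]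
    [MeasurableSpace β] [MeasurableSpace γ] {X : Ω → β} {Y : Ω → γ} (hXY : IndepFun X Y μ)
    (hX : Measurable X) (hY : Measurable Y) {F : β × γ → ℝ} (hF : Measurable F) {c : ℝ}
    (hFc : ∀ p, ‖F p‖ ≤ c) :
    ∫ ω, F (X ω, Y ω) ∂μ = ∫ ω, ∫ y, F (X ω, y) ∂(μ.map Y) ∂μ := by
  have hprod : μ.map (fun ω => (X ω, Y ω)) = (μ.map X).prod (μ.map Y) :=
    (indepFun_iff_map_prod_eq_prod_map_map hX.aemeasurable hY.aemeasurable).1 hXY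
  calc ∫ ω, F (X ω, Y ω) ∂μ = ∫ p, F p ∂(μ.map fun ω => (X ω, Y ω)) :=
        (integral_map (hX.prodMk hY).aemeasurable hF.aestronglyMeasurable).symm
    _ = ∫ x, ∫ y, F (x, y) ∂(μ.map Y) ∂(μ.map X) := by
        rw [hprod]
        exact integral_prod F (.of_bound hF.aestronglyMeasurable c (.of_forall hFc))
    _ = ∫ ω, ∫ y, F (X ω, y) ∂(μ.map Y) ∂μ :=
        integral_map hX.aemeasurable
          hF.stronglyMeasurable.integral_prod_right'.aestronglyMeasurable

lemma exists_pos_le_rpow_mul_of_tendsto {f : ℕ → ℝ} (hf : Antitone f) {α C : ℝ} (hα : 0 ≤ α)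
    (hC : 0 < C) (h : Tendsto (fun n : ℕ => (n : ℝ) ^ α * f n) atTop (nhds C)) :
    ∃ c > 0, ∀ n : ℕ, 1 ≤ n → c ≤ (n : ℝ) ^ α * f n := by
  obtain ⟨N, hN⟩ := eventually_atTop.1 (h.eventually (eventually_ge_nhds (half_lt_self hC)))
  set N' := max N 1
  have hN' : 1 ≤ (N' : ℝ) ^ α := Real.one_le_rpow (by exact_mod_cast le_max_right N 1) hα
  refine ⟨C / 2 / (N' : ℝ) ^ α, by positivity, fun n hn => ?_⟩
  rcases le_total N' n with hle | hle
  · calc C / 2 / (N' : ℝ) ^ α ≤ C / 2 := div_le_self (by positivity) hN'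
      _ ≤ (n : ℝ) ^ α * f n := hN n ((le_max_left _ _).trans hle)
  · have hfN : C / 2 / (N' : ℝ) ^ α ≤ f N' := by
      rw [div_le_iff₀ (by positivity), mul_comm]
      exact hN N' (le_max_left _ _)
    have hfn : 0 ≤ f n := le_trans (by positivity) (hfN.trans (hf hle))
    calc C / 2 / (N' : ℝ) ^ α ≤ f n := hfN.trans (hf hle)
      _ ≤ (n : ℝ) ^ α * f n :=
        le_mul_of_one_le_left hfn (Real.one_le_rpow (by exact_mod_cast hn) hα)

namespace RandomWalk

variable {Ω : Type*}

def walk (ξ : ℕ → Ω → ℤ) (n : ℕ) (ω : Ω) : ℤ := ∑ i ∈ Finset.range n, ξ i ω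

def stayIn (ξ : ℕ → Ω → ℤ) (B : Set ℤ) (n : ℕ) : Set Ω := {ω | ∀ j ≤ n, walk ξ j ω ∈ B}

def exitInto (ξ : ℕ → Ω → ℤ) (B U : Set ℤ) (n : ℕ) : Set Ω :=
  stayIn ξ B n ∩ {ω | walk ξ (n + 1) ω ∈ U}

variable {ξ : ℕ → Ω → ℤ}

@[simp] lemma walk_zero (ω : Ω) : walk ξ 0 ω = 0 := by simp [walk]

lemma walk_succ (n : ℕ) (ω : Ω) : walk ξ (n + 1) ω = walk ξ n ω + ξ n ω :=
  Finset.sum_range_succ _ _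

lemma stayIn_zero {B : Set ℤ} (h0 : 0 ∈ B) : stayIn ξ B 0 = Set.univ := by
  ext ω
  simp [stayIn, h0]

lemma stayIn_succ (B : Set ℤ) (n : ℕ) :
    stayIn ξ B (n + 1) = stayIn ξ B n ∩ {ω | walk ξ (n + 1) ω ∈ B} := by
  ext ω
  simp only [stayIn, Set.mem_inter_iff, Set.mem_ofPred_eq]
  exact ⟨fun h => ⟨fun j hj => h j (by omega), h _ le_rfl⟩,
    fun ⟨h, h'⟩ j hj => (Nat.le_succ_iff.1 hj).elim (h j) fun e => e ▸ h'⟩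

lemma stayIn_antitone (B : Set ℤ) : Antitone (stayIn ξ B) :=
  fun _ _ hij _ hω j hj => hω j (hj.trans hij)

lemma exitInto_subset_diff {B U : Set ℤ} (hBU : Disjoint B U) (n : ℕ) :
    exitInto ξ B U n ⊆ stayIn ξ B n \ stayIn ξ B (n + 1) := by
  rintro ω ⟨hstay, hU⟩
  exact ⟨hstay, fun hstay' => hBU.ne_of_mem (hstay' (n + 1) le_rfl) hU rfl⟩

lemma setOf_forall_walk_mem_union_subset {B U : Set ℤ} (h0 : 0 ∈ B) (k : ℕ) :
    {ω | ∀ j ≤ k, walk ξ j ω ∈ B ∪ U} ⊆ stayIn ξ B k ∪ ⋃ n ∈ Finset.range k, exitInto ξ B U n := by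
  induction k with
  | zero => simp [stayIn_zero h0]
  | succ k ih =>
    intro ω hω
    rcases ih fun j hj => hω j (by omega) with hstay | hexit
    · rcases hω (k + 1) le_rfl with hB | hU
      · exact Or.inl (stayIn_succ B k ▸ ⟨hstay, hB⟩)
      · exact Or.inr (Set.mem_biUnion (Finset.self_mem_range_succ k) ⟨hstay, hU⟩)
    · exact Or.inr (Set.biUnion_mono (fun n hn => Finset.range_subset_range.2 k.le_succ hn)
        (fun _ _ => le_rfl) hexit)

variable [MeasurableSpace Ω] {μ : Measure Ω}

lemma measurable_walk (hmeas : ∀ i, Measurable (ξ i)) (n : ℕ) : Measurable (walk ξ n) :=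
  Finset.measurable_fun_sum _ fun i _ => hmeas i

lemma measurableSet_stayIn (hmeas : ∀ i, Measurable (ξ i)) (B : Set ℤ) (n : ℕ) :
    MeasurableSet (stayIn ξ B n) := by
  simp only [stayIn, Set.ofPred_forall]
  exact .iInter fun j => .iInter fun _ => measurable_walk hmeas j .of_discrete

lemma measurableSet_exitInto (hmeas : ∀ i, Measurable (ξ i)) (B U : Set ℤ) (n : ℕ) :
    MeasurableSet (exitInto ξ B U n) :=
  (measurableSet_stayIn hmeas B n).inter (measurable_walk hmeas (n + 1) .of_discrete)

lemma indepFun_path_next (hmeas : ∀ i, Measurable (ξ i)) (hindep : iIndepFun ξ μ) (n : ℕ) :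
    IndepFun (fun ω (j : Fin (n + 1)) => walk ξ j ω) (ξ n) μ := by
  set past : MeasurableSpace Ω := ⨆ i < n, MeasurableSpace.comap (ξ i) inferInstance
  have hpast : Indep past (MeasurableSpace.comap (ξ n) inferInstance) μ := by
    simpa [past] using indep_iSup_of_disjoint (fun i => (hmeas i).comap_le)
      ((iIndepFun_iff_iIndep _ _ _).1 hindep) (S := Set.Iio n) (T := {n}) (by simp)
  have hpath : Measurable[past] (fun ω (j : Fin (n + 1)) => walk ξ j ω) := by
    refine measurable_pi_lambda _ fun j => Finset.measurable_fun_sum _ fun i hi => ?_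
    refine (comap_measurable (ξ i)).mono ?_ le_rfl
    have hin : i < n := by
      simp only [Finset.mem_range] at hi; omega
    exact le_iSup₂ (f := fun i (_ : i < n) => MeasurableSpace.comap (ξ i) inferInstance) i hin
  rw [IndepFun_iff_Indep]
  exact indep_of_indep_of_le_left hpast hpath.comap_le

lemma integrable_comp_walk [IsFiniteMeasure μ] (hmeas : ∀ i, Measurable (ξ i)) {h : ℤ → ℝ}
    {c : ℝ} (hc : ∀ z, ‖h z‖ ≤ c) (n : ℕ) : Integrable (fun ω => h (walk ξ n ω)) μ :=
  .of_bound ((measurable_of_countable h).comp (measurable_walk hmeas n)).aestronglyMeasurable c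
    (.of_forall fun _ => hc _)

lemma setIntegral_stayIn_succ_add_le [IsFiniteMeasure μ] (hmeas : ∀ i, Measurable (ξ i))
    {B U : Set ℤ} (hBU : Disjoint B U) {h : ℤ → ℝ} {c : ℝ} (hc : ∀ z, ‖h z‖ ≤ c)
    (hh : ∀ z, 0 ≤ h z) {M : ℝ} (hM : ∀ z ∈ U, M ≤ h z) (n : ℕ) :
    ∫ ω in stayIn ξ B (n + 1), h (walk ξ (n + 1) ω) ∂μ + M * μ.real (exitInto ξ B U n)
      ≤ ∫ ω in stayIn ξ B n, h (walk ξ (n + 1) ω) ∂μ := by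
  have hf := integrable_comp_walk (μ := μ) hmeas hc (n + 1)
  rw [← integral_inter_add_sdiff (s := stayIn ξ B n) (measurableSet_stayIn hmeas B (n + 1))
    hf.integrableOn,
    Set.inter_eq_right.2 (stayIn_antitone B n.le_succ)]
  gcongr
  calc M * μ.real (exitInto ξ B U n)
      ≤ ∫ ω in exitInto ξ B U n, h (walk ξ (n + 1) ω) ∂μ :=
        setIntegral_ge_of_const_le_real (measurableSet_exitInto hmeas B U n) (measure_ne_top _ _)
          (fun ω hω => hM _ hω.2) hf.integrableOn
    _ ≤ ∫ ω in stayIn ξ B n \ stayIn ξ B (n + 1), h (walk ξ (n + 1) ω) ∂μ :=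
        setIntegral_mono_set hf.integrableOn (.of_forall fun ω => hh _)
          (.of_forall (exitInto_subset_diff hBU n))

variable [IsProbabilityMeasure μ] {ν : Measure ℤ} [IsProbabilityMeasure ν]

lemma setIntegral_stayIn_walk_succ_le (hmeas : ∀ i, Measurable (ξ i)) (hindep : iIndepFun ξ μ)
    (hdist : ∀ i, μ.map (ξ i) = ν) {B : Set ℤ} {h : ℤ → ℝ} {c : ℝ} (hc : ∀ z, ‖h z‖ ≤ c)
    {δ : ℝ} (hdrift : ∀ x ∈ B, ∫ y, h (x + y) ∂ν ≤ h x - δ) (n : ℕ) :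
    ∫ ω in stayIn ξ B n, h (walk ξ (n + 1) ω) ∂μ
      ≤ ∫ ω in stayIn ξ B n, h (walk ξ n ω) ∂μ - δ * μ.real (stayIn ξ B n) := by
  classical
  set path : Ω → Fin (n + 1) → ℤ := fun ω j => walk ξ j ω
  set T : Set (Fin (n + 1) → ℤ) := {v | ∀ j, v j ∈ B}
  have hstay : stayIn ξ B n = path ⁻¹' T := by
    ext ω
    exact ⟨fun hω j => hω j (Fin.is_le j), fun hω j hj => hω ⟨j, by omega⟩⟩
  have hs := measurableSet_stayIn hmeas B n
  set F : (Fin (n + 1) → ℤ) × ℤ → ℝ := fun p => if p.1 ∈ T then h (p.1 (Fin.last n) + p.2) else 0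
  have hF : ∀ p, ‖F p‖ ≤ c := fun p => by
    by_cases hp : p.1 ∈ T
    · simpa [F, hp] using hc _
    · simpa [F, hp] using (norm_nonneg _).trans (hc 0)
  have hpath : Measurable path := measurable_pi_lambda _ fun j => measurable_walk hmeas j
  have hT : ∀ ω, path ω ∈ T ↔ ω ∈ stayIn ξ B n := fun ω => by rw [hstay]; rfl
  have hG : ∀ ω, ‖∫ y, F (path ω, y) ∂ν‖ ≤ c := fun ω =>
    norm_integral_le_of_norm_le_const (.of_forall fun y => hF _) |>.trans (by simp)
  calc ∫ ω in stayIn ξ B n, h (walk ξ (n + 1) ω) ∂μ = ∫ ω, F (path ω, ξ n ω) ∂μ := by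
        rw [← integral_indicator hs]
        refine integral_congr_ae (.of_forall fun ω => ?_)
        by_cases hω : ω ∈ stayIn ξ B n
        · rw [Set.indicator_of_mem hω, walk_succ]
          exact (if_pos ((hT ω).2 hω)).symm
        · rw [Set.indicator_of_notMem hω]
          exact (if_neg (mt (hT ω).1 hω)).symm
    _ = ∫ ω, ∫ y, F (path ω, y) ∂ν ∂μ := by
        rw [(indepFun_path_next hmeas hindep n).integral_comp_eq_integral_integral hpath (hmeas n)
          (measurable_of_countable F) hF, hdist]
    _ ≤ ∫ ω, (stayIn ξ B n).indicator (fun ω => h (walk ξ n ω) - δ) ω ∂μ := by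
        refine integral_mono
          (.of_bound ((measurable_of_countable fun v => ∫ y, F (v, y) ∂ν).comp
            hpath).aestronglyMeasurable c (.of_forall hG))
          (((integrable_comp_walk hmeas hc n).sub (integrable_const δ)).indicator hs)
          fun ω => ?_
        by_cases hω : ω ∈ stayIn ξ B n
        · rw [Set.indicator_of_mem hω]
          have hF' : ∀ y, F (path ω, y) = h (walk ξ n ω + y) := fun y => if_pos ((hT ω).2 hω)
          simp_rw [hF']
          exact hdrift _ (hω n le_rfl)
        · have hF' : ∀ y, F (path ω, y) = 0 := fun y => if_neg (mt (hT ω).1 hω)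
          simp [hF', Set.indicator_of_notMem hω]
    _ = _ := by
        rw [integral_indicator hs, integral_sub (integrable_comp_walk hmeas hc n).integrableOn
          (integrable_const δ), setIntegral_const, smul_eq_mul, mul_comm]

lemma setIntegral_stayIn_add_sum_le (hmeas : ∀ i, Measurable (ξ i)) (hindep : iIndepFun ξ μ)
    (hdist : ∀ i, μ.map (ξ i) = ν) {B U : Set ℤ} (hBU : Disjoint B U) (h0 : 0 ∈ B) {h : ℤ → ℝ}
    {c : ℝ} (hc : ∀ z, ‖h z‖ ≤ c) (hh : ∀ z, 0 ≤ h z) {M : ℝ} (hM : ∀ z ∈ U, M ≤ h z) {δ : ℝ}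
    (hdrift : ∀ x ∈ B, ∫ y, h (x + y) ∂ν ≤ h x - δ) (N : ℕ) :
    ∫ ω in stayIn ξ B N, h (walk ξ N ω) ∂μ
      + ∑ n ∈ Finset.range N, (M * μ.real (exitInto ξ B U n) + δ * μ.real (stayIn ξ B n))
      ≤ h 0 := by
  induction N with
  | zero => simp [stayIn_zero h0]
  | succ N ih =>
    have hA := setIntegral_stayIn_walk_succ_le hmeas hindep hdist hc hdrift N
    have hB := setIntegral_stayIn_succ_add_le (μ := μ) hmeas hBU hc hh hM N
    rw [Finset.sum_range_succ]
    linarith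

theorem measureReal_forall_walk_mem_le (hmeas : ∀ i, Measurable (ξ i))
    (hindep : iIndepFun ξ μ) (hdist : ∀ i, μ.map (ξ i) = ν) {B U : Set ℤ} (hBU : Disjoint B U)
    (h0 : 0 ∈ B) {h : ℤ → ℝ} {c : ℝ} (hc : ∀ z, ‖h z‖ ≤ c) (hh : ∀ z, 0 ≤ h z) {M : ℝ}
    (hM0 : 0 < M) (hM : ∀ z ∈ U, M ≤ h z) {δ : ℝ} (hδ : 0 < δ)
    (hdrift : ∀ x ∈ B, ∫ y, h (x + y) ∂ν ≤ h x - δ) {k : ℕ} (hk : 0 < k) :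
    μ.real {ω | ∀ j ≤ k, walk ξ j ω ∈ B ∪ U} ≤ h 0 / M + h 0 / (δ * k) := by
  have htel := setIntegral_stayIn_add_sum_le hmeas hindep hdist hBU h0 hc hh hM hdrift k
  have hfinal : 0 ≤ ∫ ω in stayIn ξ B k, h (walk ξ k ω) ∂μ := setIntegral_nonneg
    (measurableSet_stayIn hmeas B k) fun ω _ => hh _
  rw [Finset.sum_add_distrib, ← Finset.mul_sum, ← Finset.mul_sum] at htel
  have hexit : ∑ n ∈ Finset.range k, μ.real (exitInto ξ B U n) ≤ h 0 / M := by
    rw [le_div_iff₀ hM0]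
    nlinarith [Finset.sum_nonneg fun n (_ : n ∈ Finset.range k) =>
      measureReal_nonneg (μ := μ) (s := stayIn ξ B n)]
  have hstay : μ.real (stayIn ξ B k) ≤ h 0 / (δ * k) := by
    have hle : k * μ.real (stayIn ξ B k) ≤ ∑ n ∈ Finset.range k, μ.real (stayIn ξ B n) := by
      simpa using Finset.card_nsmul_le_sum (Finset.range k) _ _ fun n hn =>
        measureReal_mono (μ := μ) (stayIn_antitone B (Finset.mem_range.1 hn).le)
    rw [le_div_iff₀ (by positivity)]
    nlinarith [Finset.sum_nonneg fun n (_ : n ∈ Finset.range k) =>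
      measureReal_nonneg (μ := μ) (s := exitInto ξ B U n)]
  calc μ.real {ω | ∀ j ≤ k, walk ξ j ω ∈ B ∪ U}
      ≤ μ.real (stayIn ξ B k) + ∑ n ∈ Finset.range k, μ.real (exitInto ξ B U n) :=
        (measureReal_mono (setOf_forall_walk_mem_union_subset h0 k)).trans
          ((measureReal_union_le _ _).trans (add_le_add le_rfl (measureReal_biUnion_finset_le _ _)))
    _ ≤ h 0 / M + h 0 / (δ * k) := by linarith

def barrier (l m : ℕ) (z : ℤ) : ℝ := (max 0 (l + min z (m - 1)) : ℤ)

noncomputable def meanExcess (ν : Measure ℤ) (b : ℤ) : ℝ := ∫ y, (max (y - b) 0 : ℤ) ∂ν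

lemma barrier_nonneg (l m : ℕ) (z : ℤ) : 0 ≤ barrier l m z := by
  unfold barrier; exact_mod_cast le_max_left _ _

lemma barrier_le (l m : ℕ) (z : ℤ) : barrier l m z ≤ l + m := by
  unfold barrier; exact_mod_cast (by omega : max 0 ((l : ℤ) + min z (m - 1)) ≤ l + m)

lemma barrier_zero {l m : ℕ} (hm : 1 ≤ m) : barrier l m 0 = l := by
  unfold barrier; exact_mod_cast (by omega : max 0 ((l : ℤ) + min 0 (m - 1)) = l)

lemma le_barrier {l m : ℕ} {z : ℤ} (hz : (m : ℤ) - 1 ≤ z) (hl : 1 ≤ l) :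
    (m : ℝ) ≤ barrier l m z := by
  unfold barrier; exact_mod_cast (by omega : (m : ℤ) ≤ max 0 (l + min z (m - 1)))

lemma integrable_max_sub_zero (hint : Integrable (fun x : ℤ => (x : ℝ)) ν) (b : ℤ) :
    Integrable (fun y : ℤ => ((max (y - b) 0 : ℤ) : ℝ)) ν := by
  simpa using (hint.sub (integrable_const (b : ℝ))).pos_part

lemma mul_measureReal_le_meanExcess (hint : Integrable (fun x : ℤ => (x : ℝ)) ν) {b t n : ℤ}
    (hn : b + t ≤ n) : t * ν.real {j | n ≤ j} ≤ meanExcess ν b := by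
  have hs : MeasurableSet {j : ℤ | n ≤ j} := .of_discrete
  rw [mul_comm, ← smul_eq_mul, ← integral_indicator_const _ hs]
  refine integral_mono ((integrable_const _).indicator hs) (integrable_max_sub_zero hint b)
    fun y => ?_
  by_cases hy : y ∈ {j : ℤ | n ≤ j}
  · rw [Set.indicator_of_mem hy]
    exact Int.cast_le.2 (by simp only [Set.mem_ofPred_eq] at hy; omega)
  · rw [Set.indicator_of_notMem hy]
    exact Int.cast_nonneg (le_max_right _ _)

lemma integral_barrier_add_le (hsupp : ν {k : ℤ | k < -1} = 0)
    (hint : Integrable (fun x : ℤ => (x : ℝ)) ν) (hmean : ∫ x : ℤ, (x : ℝ) ∂ν = 0) {l m : ℕ}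
    {x : ℤ} (hx : x ∈ Set.Ioo (-(l : ℤ)) (m - 1)) :
    ∫ y, barrier l m (x + y) ∂ν ≤ barrier l m x - meanExcess ν (m + l - 2) := by
  obtain ⟨hx₁, hx₂⟩ := hx
  have hjump : ∀ᵐ y ∂ν, -1 ≤ y := by
    rw [ae_iff]
    simpa only [not_le] using hsupp
  have hpoint : ∀ᵐ y ∂ν, barrier l m (x + y)
      ≤ ((l + x : ℤ) : ℝ) + y - ((max (y - (m + l - 2)) 0 : ℤ) : ℝ) := by
    -- `x + y ≥ -ℓ`, so only the cap at `m - 1` can truncate `ℓ + (x + y)`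
    filter_upwards [hjump] with y hy
    unfold barrier
    exact_mod_cast (by omega : max 0 (l + min (x + y) (m - 1))
      ≤ l + x + y - max (y - (m + l - 2)) 0)
  have hx : barrier l m x = ((l + x : ℤ) : ℝ) := by
    unfold barrier; exact_mod_cast (by omega : max 0 (l + min x (m - 1)) = l + x)
  calc ∫ y, barrier l m (x + y) ∂ν
      ≤ ∫ y, (((l + x : ℤ) : ℝ) + y - ((max (y - (m + l - 2)) 0 : ℤ) : ℝ)) ∂ν :=
        integral_mono_ae (.of_bound (measurable_of_countable _).aestronglyMeasurable (l + m)
          (.of_forall fun y => by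
            rw [Real.norm_of_nonneg (barrier_nonneg l m _)]; exact barrier_le l m _))
          (((integrable_const _).add hint).sub (integrable_max_sub_zero hint _)) hpoint
    _ = barrier l m x - meanExcess ν (m + l - 2) := by
        rw [integral_sub (f := fun y : ℤ => ((l + x : ℤ) : ℝ) + y)
            ((integrable_const _).add hint) (integrable_max_sub_zero hint _),
          integral_add (integrable_const _) hint, hmean, integral_const, hx, meanExcess]
        simp

theorem measureReal_forall_walk_gt_le (hmeas : ∀ i, Measurable (ξ i)) (hindep : iIndepFun ξ μ)
    (hdist : ∀ i, μ.map (ξ i) = ν) (hsupp : ν {k : ℤ | k < -1} = 0)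
    (hint : Integrable (fun x : ℤ => (x : ℝ)) ν) (hmean : ∫ x : ℤ, (x : ℝ) ∂ν = 0)
    {l m k : ℕ} (hl : 1 ≤ l) (hlm : l < m) (hk : 0 < k) (hδ : 0 < meanExcess ν (m + l - 2)) :
    μ.real {ω | ∀ j ≤ k, -(l : ℤ) < walk ξ j ω}
      ≤ l / m + l / (meanExcess ν (m + l - 2) * k) := by
  have hsplit : {ω | ∀ j ≤ k, -(l : ℤ) < walk ξ j ω}
      = {ω | ∀ j ≤ k, walk ξ j ω ∈ Set.Ioo (-(l : ℤ)) (m - 1) ∪ Set.Ici ((m : ℤ) - 1)} := by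
    ext ω
    refine forall₂_congr fun j _ => ?_
    simp only [Set.mem_union, Set.mem_Ioo, Set.mem_Ici]
    omega
  rw [hsplit, ← barrier_zero (l := l) (m := m) (by omega)]
  exact measureReal_forall_walk_mem_le hmeas hindep hdist
    (B := Set.Ioo (-(l : ℤ)) (m - 1)) (U := Set.Ici ((m : ℤ) - 1))
    (Set.disjoint_left.2 fun z hz hz' => not_le.2 hz.2 hz')
    (by simp; omega) (c := l + m)
    (fun z => by rw [Real.norm_of_nonneg (barrier_nonneg l m z)]; exact barrier_le l m z)
    (barrier_nonneg l m) (by exact_mod_cast (by omega : 0 < m))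
    (fun z hz => le_barrier hz hl) hδ (fun x hx => integral_barrier_add_le hsupp hint hmean hx) hk

theorem measureReal_forall_walk_gt_le_rpow (hmeas : ∀ i, Measurable (ξ i))
    (hindep : iIndepFun ξ μ) (hdist : ∀ i, μ.map (ξ i) = ν) (hsupp : ν {k : ℤ | k < -1} = 0)
    (hint : Integrable (fun x : ℤ => (x : ℝ)) ν) (hmean : ∫ x : ℤ, (x : ℝ) ∂ν = 0)
    {α c : ℝ} (hα : 0 < α) (hc : 0 < c)
    (htail : ∀ n : ℕ, 1 ≤ n → c ≤ (n : ℝ) ^ α * ν.real {j | (n : ℤ) ≤ j})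
    {k l : ℕ} (hk : 1 ≤ k) (hl : 1 ≤ l) :
    μ.real {ω | ∀ j ≤ k, -(l : ℤ) < walk ξ j ω} ≤ (1 + 6 ^ α / c) * l * (k : ℝ) ^ (-(1 / α)) := by
  set q := (k : ℝ) ^ (1 / α)
  have hk1 : (1 : ℝ) ≤ k := by exact_mod_cast hk
  have hq1 : 1 ≤ q := Real.one_le_rpow hk1 (by positivity)
  have hqα : q ^ α = k := by
    rw [← Real.rpow_mul (by positivity), one_div_mul_cancel hα.ne', Real.rpow_one]
  have hK : 1 ≤ 1 + 6 ^ α / c := le_add_of_nonneg_right (by positivity)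
  rw [Real.rpow_neg (by positivity), mul_assoc, ← div_eq_mul_inv]
  rcases le_or_gt q l with hql | hlq
  · calc μ.real {ω | ∀ j ≤ k, -(l : ℤ) < walk ξ j ω} ≤ 1 := measureReal_le_one
      _ ≤ l / q := (one_le_div (by positivity)).2 hql
      _ ≤ (1 + 6 ^ α / c) * (l / q) := le_mul_of_one_le_left (by positivity) hK
  set m := ⌈q⌉₊
  have hlm : l < m := Nat.lt_ceil.2 hlq
  have hqm : q ≤ m := Nat.le_ceil q
  have hm2q : (m : ℝ) ≤ 2 * q := by linarith [Nat.ceil_lt_add_one (by positivity : 0 ≤ q)]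
  set τ := ν.real {j | ((3 * m : ℕ) : ℤ) ≤ j}
  have hτ : c / 6 ^ α ≤ k * τ := by
    rw [div_le_iff₀ (by positivity)]
    calc c ≤ ((3 * m : ℕ) : ℝ) ^ α * τ := htail _ (by omega)
      _ ≤ (6 * q) ^ α * τ := by gcongr; push_cast; linarith
      _ = k * τ * 6 ^ α := by rw [Real.mul_rpow (by norm_num) (by positivity), hqα]; ring
  set δ := meanExcess ν (m + l - 2)
  have hδ : m * τ ≤ δ := by
    exact_mod_cast mul_measureReal_le_meanExcess hint (by push_cast; omega)
  have hδk : m * (c / 6 ^ α) ≤ δ * k := by nlinarith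
  have hmc : 0 < m * (c / 6 ^ α) := by positivity
  calc μ.real {ω | ∀ j ≤ k, -(l : ℤ) < walk ξ j ω} ≤ l / m + l / (δ * k) :=
        measureReal_forall_walk_gt_le hmeas hindep hdist hsupp hint hmean hl hlm (by omega)
          (pos_of_mul_pos_left (hmc.trans_le hδk) (by positivity))
    _ ≤ l / m + l / (m * (c / 6 ^ α)) := by gcongr
    _ = (1 + 6 ^ α / c) * (l / m) := by field_simp
    _ ≤ (1 + 6 ^ α / c) * (l / q) := by gcongr

end RandomWalk

open RandomWalk in
/-- There is a finite constant `K` such that for all `k, ℓ ≥ 1`,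
`ℙ(J_k > -ℓ) ≤ K · ℓ · k^{-1/α}`, where `J_k = min_{0 ≤ j ≤ k} S_j`. -/
theorem stmt_17
    (α : ℝ) (hα₁ : 1 < α)
    (Ω : Type) [MeasureSpace Ω] [IsProbabilityMeasure (ℙ : Measure Ω)]
    (ν : Measure ℤ) [IsProbabilityMeasure ν]
    (hsupp : ν {k : ℤ | k < -1} = 0)
    (hint : Integrable (fun x : ℤ => (x : ℝ)) ν)
    (hmean : ∫ x : ℤ, (x : ℝ) ∂ν = 0)
    (C : ℝ) (hC : 0 < C)
    (htail : Tendsto (fun k : ℕ => (k : ℝ) ^ α * (ν {j : ℤ | (k : ℤ) ≤ j}).toReal)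
      atTop (nhds C))
    (ξ : ℕ → Ω → ℤ) (hmeas : ∀ i, Measurable (ξ i))
    (hindep : iIndepFun ξ ℙ)
    (hdist : ∀ i, Measure.map (ξ i) ℙ = ν)
    (S : ℕ → Ω → ℤ) (hS : ∀ n ω, S n ω = ∑ i ∈ Finset.range n, ξ i ω)
    (J : ℕ → Ω → ℤ)
    (hJ : ∀ n ω, J n ω = (Finset.range (n + 1)).inf' (by simp) (fun k => S k ω)) :
    ∃ K : ℝ, ∀ k : ℕ, 1 ≤ k → ∀ l : ℕ, 1 ≤ l →
      ℙ {ω | -(l : ℤ) < J k ω} ≤ ENNReal.ofReal (K * (l : ℝ) * (k : ℝ) ^ (-(1 / α))) := by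
  have htail_antitone : Antitone fun n : ℕ => ν.real {j : ℤ | (n : ℤ) ≤ j} :=
    fun a b hab => measureReal_mono fun j (hj : (b : ℤ) ≤ j) => (Int.ofNat_le.2 hab).trans hj
  obtain ⟨c, hc, hc_tail⟩ :=
    exists_pos_le_rpow_mul_of_tendsto htail_antitone (by linarith) hC htail
  refine ⟨1 + 6 ^ α / c, fun k hk l hl => ?_⟩
  have hJ_walk : {ω | -(l : ℤ) < J k ω} = {ω | ∀ j ≤ k, -(l : ℤ) < walk ξ j ω} := by
    ext ω
    simp [hJ, hS, walk, Finset.lt_inf'_iff]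
  rw [hJ_walk, ← ofReal_measureReal]
  exact ENNReal.ofReal_le_ofReal <| measureReal_forall_walk_gt_le_rpow hmeas hindep hdist hsupp
    hint hmean (by linarith) hc hc_tail hk hl
end

section
/- Assume there exists a constant K₁ ∈ (0,1] such that ℙ(S_{τ₁} ≥ m) ≥ K₁ · m^{1−α} for every integer m ≥ 1, where τ₁ = inf{k ≥ 1 : S_k ≥ 0}. Then for every integer m ≥ 1 and every real y ≥ 1, ℙ(Δ(ρ_m) > y · m^{α−1}) ≤ exp(−K₁·y/2), where ρ_m = inf{k ≥ 0 : S_k ≥ m} (which is almost surely finite) and Δ(k) = #{ℓ ∈ {1,…,k} : S_ℓ = max_{0≤n≤ℓ} S_n} is the number of weak records of the walk up to time k. -/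
/-!
Let `t_n` be the time of the `n`-th weak record of the walk (`t_0 = 0`). If more than `n` weak
records occur before the walk first reaches level `m`, then `S_{t_n} < m`, and the walk restarted
at `t_n` reaches its first weak ladder epoch with a ladder height `< m` (that epoch is at most
the next record, which still lies below `m`). The Markov property at the deterministic times
`t`, over which the events `{t_n = t}` are disjoint, bounds the probability of one more such
step by `ℙ(S_{τ₁} < m) ≤ 1 - K₁ m^{1-α}`, hence `ℙ(Δ(ρ_m) > n) ≤ (1 - K₁ m^{1-α})^n`.
For `n = ⌊y m^{α-1}⌋ ≥ y m^{α-1} / 2` this is at most `exp(-K₁ y / 2)`.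
-/

open MeasureTheory ProbabilityTheory Filter

namespace RandomWalk

open Finset
open scoped Classical

section Markov

variable {β : Type*} [MeasurableSpace β]

lemma measurableSet_cylinderEvents_Iio [Countable β] [MeasurableSingletonClass β]
    {t : ℕ} {A : Set (ℕ → β)} (hA : ∀ y z, (∀ i < t, y i = z i) → y ∈ A → z ∈ A) :
    MeasurableSet[cylinderEvents (Set.Iio t)] A := by
  set F : (ℕ → β) → (Set.Iio t → β) := (Set.Iio t).domRestrict
  have hA' : A = F ⁻¹' (F '' A) := by
    refine (Set.subset_preimage_image F A).antisymm fun z ⟨y, hy, hyz⟩ => hA y z ?_ hy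
    exact fun i hi => congrFun hyz ⟨i, hi⟩
  rw [hA']
  exact measurable_restrict_cylinderEvents (X := fun _ => β) _ (Set.to_countable _).measurableSet

lemma measure_inter_shift_preimage (ν : Measure β) [IsProbabilityMeasure ν] (t : ℕ)
    {A E : Set (ℕ → β)} (hA : MeasurableSet[cylinderEvents (Set.Iio t)] A)
    (hE : MeasurableSet E) :
    Measure.infinitePi (fun _ => ν) (A ∩ (fun y i => y (t + i)) ⁻¹' E) =
      Measure.infinitePi (fun _ => ν) A * Measure.infinitePi (fun _ => ν) E := by
  set μ := Measure.infinitePi fun _ : ℕ => ν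
  have hindep : iIndep (fun i => MeasurableSpace.comap (fun y : ℕ → β => y i) ‹_›) μ :=
    (iIndepFun_iff_iIndep _ _ _).1 (iIndepFun_infinitePi (X := fun _ => id) fun _ => measurable_id)
  have hpast_future : Indep (cylinderEvents (Set.Iio t)) (cylinderEvents (Set.Ici t)) μ :=
    indep_iSup_of_disjoint (fun i => (measurable_pi_apply (X := fun _ => β) i).comap_le) hindep
      (Set.Iio_disjoint_Ici le_rfl)
  have hshift : Measurable[cylinderEvents (Set.Ici t)] fun (y : ℕ → β) i => y (t + i) :=
    measurable_cylinderEvents_lambda _ fun i =>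
      measurable_cylinderEvent_apply (Nat.le_add_right t i)
  have hμ : μ.map (fun y i => y (t + i)) = μ :=
    Measure.map_infinitePi_infinitePi_of_inj (add_right_injective t)
  rw [(Indep_iff _ _ μ).1 hpast_future A _ hA (hshift hE), ← Measure.map_apply
    (measurable_pi_lambda _ fun i => measurable_pi_apply (t + i)) hE, hμ]

lemma _root_.ProbabilityTheory.iIndepFun.measure_preimage_eq_infinitePi {Ω : Type*}
    [MeasurableSpace Ω] {P : Measure Ω} [IsProbabilityMeasure P] {ν : Measure β}
    [IsProbabilityMeasure ν] {ξ : ℕ → Ω → β} (hindep : iIndepFun ξ P)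
    (hmeas : ∀ i, Measurable (ξ i)) (hdist : ∀ i, P.map (ξ i) = ν) {s : Set (ℕ → β)}
    (hs : MeasurableSet s) :
    P ((fun ω i => ξ i ω) ⁻¹' s) = Measure.infinitePi (fun _ => ν) s := by
  rw [← Measure.map_apply (measurable_pi_lambda _ hmeas) hs,
    hindep.map_fun_eq_infinitePi_map hmeas]
  simp_rw [hdist]

end Markov

def partialSum (y : ℕ → ℤ) (n : ℕ) : ℤ := ∑ i ∈ range n, y i

def IsWeakRecord (y : ℕ → ℤ) (ℓ : ℕ) : Prop := ∀ j ≤ ℓ, partialSum y j ≤ partialSum y ℓ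

noncomputable def records (y : ℕ → ℤ) (t : ℕ) : Finset ℕ := {ℓ ∈ Icc 1 t | IsWeakRecord y ℓ}

def ladderHeightAtLeast (c : ℤ) : Set (ℕ → ℤ) :=
  {y | ∃ k, 0 < k ∧ (∀ j, 0 < j → j < k → partialSum y j < 0) ∧ c ≤ partialSum y k}

def nthRecordBelow (m : ℤ) (n t : ℕ) : Set (ℕ → ℤ) :=
  {y | IsWeakRecord y t ∧ #(records y t) = n ∧ partialSum y t < m}

variable {y z : ℕ → ℤ}

@[simp] lemma partialSum_zero : partialSum y 0 = 0 := rfl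

lemma partialSum_shift (t j : ℕ) :
    partialSum (fun i => y (t + i)) j = partialSum y (t + j) - partialSum y t := by
  simp only [partialSum, sum_range_add, add_sub_cancel_left]

lemma partialSum_congr {t j : ℕ} (h : ∀ i < t, y i = z i) (hj : j ≤ t) :
    partialSum y j = partialSum z j :=
  sum_congr rfl fun i hi => h i (by grind)

lemma IsWeakRecord.nonneg {t : ℕ} (h : IsWeakRecord y t) : 0 ≤ partialSum y t :=
  h 0 (Nat.zero_le t)

lemma isWeakRecord_zero : IsWeakRecord y 0 := by
  intro j hj
  rw [Nat.le_zero.1 hj]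

lemma isWeakRecord_congr {t ℓ : ℕ} (h : ∀ i < t, y i = z i) (hℓ : ℓ ≤ t) :
    IsWeakRecord y ℓ ↔ IsWeakRecord z ℓ := by
  unfold IsWeakRecord
  refine forall₂_congr fun j hj => ?_
  rw [partialSum_congr h (hj.trans hℓ), partialSum_congr h hℓ]

lemma records_congr {t : ℕ} (h : ∀ i < t, y i = z i) : records y t = records z t :=
  filter_congr fun _ hℓ => isWeakRecord_congr h (mem_Icc.1 hℓ).2

@[simp] lemma records_zero : records y 0 = ∅ := rfl

lemma records_succ (t : ℕ) : records y (t + 1) =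
    if IsWeakRecord y (t + 1) then insert (t + 1) (records y t) else records y t := by
  rw [records, ← insert_Icc_right_eq_Icc_add_one (by omega), filter_insert]
  rfl

lemma card_records_succ_le (t : ℕ) : #(records y (t + 1)) ≤ #(records y t) + 1 := by
  rw [records_succ]
  split_ifs
  exacts [card_insert_le _ _, Nat.le_succ _]

lemma mem_records {t ℓ : ℕ} : ℓ ∈ records y t ↔ 1 ≤ ℓ ∧ ℓ ≤ t ∧ IsWeakRecord y ℓ := by
  rw [records, mem_filter, mem_Icc, and_assoc]

lemma card_records_lt_of_isWeakRecord {t t' : ℕ} (htt' : t < t') (h : IsWeakRecord y t') :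
    #(records y t) < #(records y t') := by
  refine card_lt_card ((ssubset_iff_of_subset ?_).2 ⟨t', ?_, ?_⟩)
  · exact filter_subset_filter _ (Icc_subset_Icc_right htt'.le)
  · exact mem_records.2 ⟨by omega, le_rfl, h⟩
  · exact fun ht' => absurd (mem_records.1 ht').2.1 htt'.not_ge

lemma exists_isWeakRecord_card_records_eq {n r : ℕ} (h : n ≤ #(records y r)) :
    ∃ t ≤ r, IsWeakRecord y t ∧ #(records y t) = n := by
  induction r with
  | zero => exact ⟨0, le_rfl, isWeakRecord_zero, by simp_all⟩
  | succ r ih =>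
    by_cases hr : n ≤ #(records y r)
    · obtain ⟨t, htr, ht⟩ := ih hr
      exact ⟨t, htr.trans r.le_succ, ht⟩
    · have hrec : IsWeakRecord y (r + 1) := by
        by_contra hnot
        rw [records_succ, if_neg hnot] at h
        exact hr h
      exact ⟨r + 1, le_rfl, hrec, by have := card_records_succ_le (y := y) r; omega⟩

lemma exists_isWeakRecord_card_records_eq_of_lt {n r : ℕ} (h : n < #(records y r)) :
    ∃ t < r, IsWeakRecord y t ∧ #(records y t) = n := by
  obtain _ | r := r
  · simp at h
  · have := card_records_succ_le (y := y) r
    obtain ⟨t, htr, ht⟩ := exists_isWeakRecord_card_records_eq (y := y) (n := n) (r := r) (by omega)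
    exact ⟨t, Nat.lt_succ_of_le htr, ht⟩

lemma mem_ladderHeightAtLeast_of_le {c : ℤ} (hc : 0 < c)
    (h : c ≤ partialSum y (sInf {k | 1 ≤ k ∧ 0 ≤ partialSum y k})) :
    y ∈ ladderHeightAtLeast c := by
  set τ := sInf {k | 1 ≤ k ∧ 0 ≤ partialSum y k}
  have hτ : 0 < τ := Nat.pos_of_ne_zero fun h0 => by rw [h0, partialSum_zero] at h; omega
  refine ⟨τ, hτ, fun j hj hjτ => ?_, h⟩
  have hj' : j ∉ {k | 1 ≤ k ∧ 0 ≤ partialSum y k} := Nat.notMem_of_lt_sInf hjτ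
  simp only [Set.mem_ofPred_eq, not_and, not_le] at hj'
  exact hj' hj

lemma exists_nthRecordBelow_of_lt_card_records {m : ℤ} {n : ℕ}
    (h : n < #(records y (sInf {k | m ≤ partialSum y k}))) :
    ∃ t, y ∈ nthRecordBelow m n t := by
  obtain ⟨t, ht, hrec, hcard⟩ := exists_isWeakRecord_card_records_eq_of_lt h
  exact ⟨t, hrec, hcard, by simpa using Nat.notMem_of_lt_sInf ht⟩

lemma exists_nthRecordBelow_of_succ {m : ℤ} {n t' : ℕ} (hy : y ∈ nthRecordBelow m (n + 1) t') :
    ∃ t, y ∈ nthRecordBelow m n t ∧ (fun i => y (t + i)) ∉ ladderHeightAtLeast m := by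
  obtain ⟨hrec', hcard', hlt'⟩ := hy
  obtain ⟨t, htt', hrec, hcard⟩ :=
    exists_isWeakRecord_card_records_eq_of_lt (n.lt_succ_self.trans_eq hcard'.symm)
  have hSt := hrec' t htt'.le
  refine ⟨t, ⟨hrec, hcard, hSt.trans_lt hlt'⟩, ?_⟩
  rintro ⟨k, hk, hneg, hover⟩
  -- The ladder after `t` cannot come later than the record `t'`, which lies below `m`.
  have hkt' : k ≤ t' - t := by
    by_contra! hlt
    have := hneg (t' - t) (by omega) hlt
    rw [partialSum_shift, Nat.add_sub_cancel' htt'.le] at this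
    omega
  rw [partialSum_shift] at hover
  have := hrec' (t + k) (by omega)
  have := hrec.nonneg
  omega

lemma pairwise_disjoint_nthRecordBelow (m : ℤ) (n : ℕ) :
    Pairwise (Function.onFun Disjoint (nthRecordBelow m n)) := by
  have key : ∀ t t', t < t' → Disjoint (nthRecordBelow m n t) (nthRecordBelow m n t') := by
    intro t t' htt'
    refine Set.disjoint_left.2 fun y hy hy' => ?_
    have := card_records_lt_of_isWeakRecord htt' hy'.1
    rw [hy.2.1, hy'.2.1] at this
    exact lt_irrefl n this
  intro t t' hne
  rcases lt_or_gt_of_ne hne with h | h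
  exacts [key t t' h, (key t' t h).symm]

lemma measurable_partialSum (j : ℕ) : Measurable fun y : ℕ → ℤ => partialSum y j :=
  Finset.measurable_sum _ fun i _ => measurable_pi_apply i

lemma measurableSet_ladderHeightAtLeast (c : ℤ) : MeasurableSet (ladderHeightAtLeast c) := by
  refine measurableSet_setOfPred.2 (Measurable.exists fun k => measurable_const.and
    ((Measurable.forall fun j => measurable_const.imp (measurable_const.imp ?_)).and ?_))
  · exact measurableSet_setOfPred.1 (measurable_partialSum j measurableSet_Iio)
  · exact measurableSet_setOfPred.1 (measurable_partialSum k measurableSet_Ici)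

lemma measurableSet_nthRecordBelow (m : ℤ) (n t : ℕ) :
    MeasurableSet[cylinderEvents (Set.Iio t)] (nthRecordBelow m n t) := by
  refine measurableSet_cylinderEvents_Iio fun y z h hy => ?_
  rwa [nthRecordBelow, Set.mem_ofPred_eq, ← isWeakRecord_congr h le_rfl, ← records_congr h,
    ← partialSum_congr h le_rfl]

section Geometric

variable (ν : Measure ℤ) [IsProbabilityMeasure ν] (m : ℤ)

lemma measure_iUnion_nthRecordBelow_succ_le (n : ℕ) :
    Measure.infinitePi (fun _ => ν) (⋃ t, nthRecordBelow m (n + 1) t) ≤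
      Measure.infinitePi (fun _ => ν) (ladderHeightAtLeast m)ᶜ *
        Measure.infinitePi (fun _ => ν) (⋃ t, nthRecordBelow m n t) := by
  set μ := Measure.infinitePi fun _ : ℕ => ν
  have hsub : (⋃ t, nthRecordBelow m (n + 1) t) ⊆
      ⋃ t, nthRecordBelow m n t ∩ (fun y i => y (t + i)) ⁻¹' (ladderHeightAtLeast m)ᶜ :=
    Set.iUnion_subset fun _ _ hy => Set.mem_iUnion.2 (exists_nthRecordBelow_of_succ hy)
  calc μ (⋃ t, nthRecordBelow m (n + 1) t)
      ≤ ∑' t, μ (nthRecordBelow m n t ∩ (fun y i => y (t + i)) ⁻¹' (ladderHeightAtLeast m)ᶜ) :=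
        (measure_mono hsub).trans (measure_iUnion_le _)
    _ = ∑' t, μ (nthRecordBelow m n t) * μ (ladderHeightAtLeast m)ᶜ :=
        tsum_congr fun t => measure_inter_shift_preimage ν t
          (measurableSet_nthRecordBelow m n t) (measurableSet_ladderHeightAtLeast m).compl
    _ = μ (ladderHeightAtLeast m)ᶜ * μ (⋃ t, nthRecordBelow m n t) := by
        rw [ENNReal.tsum_mul_right, mul_comm, measure_iUnion (pairwise_disjoint_nthRecordBelow m n)
          fun t => cylinderEvents_le_pi _ (measurableSet_nthRecordBelow m n t)]

lemma measure_iUnion_nthRecordBelow_le (n : ℕ) :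
    Measure.infinitePi (fun _ => ν) (⋃ t, nthRecordBelow m n t) ≤
      Measure.infinitePi (fun _ => ν) (ladderHeightAtLeast m)ᶜ ^ n := by
  induction n with
  | zero => simpa using prob_le_one
  | succ n ih => calc
      _ ≤ _ := measure_iUnion_nthRecordBelow_succ_le ν m n
      _ ≤ _ := by rw [pow_succ']; gcongr

end Geometric

lemma one_sub_pow_floor_le_exp {p x : ℝ} (hp₀ : 0 ≤ p) (hp₁ : p ≤ 1) (hx : 1 ≤ x) :
    (1 - p) ^ ⌊x⌋₊ ≤ Real.exp (-(p * x) / 2) := by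
  have hfloor : x / 2 ≤ ⌊x⌋₊ := by
    have := Nat.lt_floor_add_one x
    have : (1 : ℝ) ≤ ⌊x⌋₊ := by exact_mod_cast Nat.one_le_floor_iff _ |>.2 hx
    linarith
  calc (1 - p) ^ ⌊x⌋₊ ≤ Real.exp (-p) ^ ⌊x⌋₊ :=
        pow_le_pow_left₀ (by linarith) (by linarith [Real.add_one_le_exp (-p)]) _
    _ = Real.exp (-(p * ⌊x⌋₊)) := by rw [← Real.exp_nat_mul]; ring_nf
    _ ≤ Real.exp (-(p * x) / 2) := by gcongr; nlinarith

lemma ofReal_one_sub_pow_floor_le_exp {α K y m : ℝ} (hα : 1 ≤ α) (hm : 1 ≤ m) (hy : 1 ≤ y)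
    (hK : 0 ≤ K) (hp : K * m ^ (1 - α) ≤ 1) :
    ENNReal.ofReal (1 - K * m ^ (1 - α)) ^ ⌊y * m ^ (α - 1)⌋₊ ≤
      ENNReal.ofReal (Real.exp (-K * y / 2)) := by
  have hx : 1 ≤ y * m ^ (α - 1) :=
    one_le_mul_of_one_le_of_one_le hy (Real.one_le_rpow hm (by linarith))
  have hpx : K * m ^ (1 - α) * (y * m ^ (α - 1)) = K * y := by
    rw [mul_mul_mul_comm, ← Real.rpow_add (by linarith)]
    simp
  rw [← ENNReal.ofReal_pow (by linarith)]
  refine ENNReal.ofReal_le_ofReal ((one_sub_pow_floor_le_exp (by positivity) hp hx).trans_eq ?_)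
  rw [hpx, neg_mul]

lemma ncard_setOf_isWeakRecord (y : ℕ → ℤ) (n : ℕ) :
    Set.ncard {l : ℕ | 1 ≤ l ∧ l ≤ n ∧ ∀ j : ℕ, j ≤ l → partialSum y j ≤ partialSum y l} =
      #(records y n) := by
  rw [← Set.ncard_coe_finset]
  congr 1
  ext l
  rw [mem_coe, mem_records]
  rfl

end RandomWalk

open RandomWalk in
theorem stmt_19_general
    (α : ℝ) (hα₁ : 1 < α)
    (Ω : Type) [MeasureSpace Ω] [IsProbabilityMeasure (ℙ : Measure Ω)]
    (ν : Measure ℤ) [IsProbabilityMeasure ν]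
    (ξ : ℕ → Ω → ℤ) (hmeas : ∀ i, Measurable (ξ i))
    (hindep : iIndepFun ξ ℙ)
    (hdist : ∀ i, Measure.map (ξ i) ℙ = ν)
    (S : ℕ → Ω → ℤ) (hS : ∀ n ω, S n ω = ∑ i ∈ Finset.range n, ξ i ω)
    (Δ : ℕ → Ω → ℕ)
    (hΔ : ∀ n ω, Δ n ω =
      Set.ncard {l : ℕ | 1 ≤ l ∧ l ≤ n ∧ ∀ m : ℕ, m ≤ l → S m ω ≤ S l ω})
    (τ : Ω → ℕ) (hτ : ∀ ω, τ ω = sInf {k : ℕ | 1 ≤ k ∧ 0 ≤ S k ω})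
    (ρ : ℕ → Ω → ℕ) (hρ : ∀ m ω, ρ m ω = sInf {k : ℕ | (m : ℤ) ≤ S k ω})
    (K₁ : ℝ) (hK₁ : 0 < K₁)
    (hladder : ∀ m : ℕ, 1 ≤ m →
      ENNReal.ofReal (K₁ * (m : ℝ) ^ ((1 : ℝ) - α)) ≤ ℙ {ω | (m : ℤ) ≤ S (τ ω) ω}) :
    ∀ m : ℕ, 1 ≤ m → ∀ y : ℝ, 1 ≤ y →
      ℙ {ω | y * (m : ℝ) ^ (α - 1) < (Δ (ρ m ω) ω : ℝ)} ≤
        ENNReal.ofReal (Real.exp (-K₁ * y / 2)) := by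
  intro m hm y hy
  obtain rfl : S = fun n ω => partialSum (fun i => ξ i ω) n := funext fun n => funext (hS n)
  set μ := Measure.infinitePi fun _ : ℕ => ν
  have hladder_m : ENNReal.ofReal (K₁ * (m : ℝ) ^ ((1 : ℝ) - α)) ≤ μ (ladderHeightAtLeast m) := by
    rw [← hindep.measure_preimage_eq_infinitePi hmeas hdist (measurableSet_ladderHeightAtLeast m)]
    refine (hladder m hm).trans (measure_mono fun ω hω => ?_)
    exact mem_ladderHeightAtLeast_of_le (by omega) ((hτ ω) ▸ hω)
  set x := y * (m : ℝ) ^ (α - 1)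
  have hevent : {ω | x < (Δ (ρ m ω) ω : ℝ)} ⊆
      (fun ω i => ξ i ω) ⁻¹' ⋃ t, nthRecordBelow m ⌊x⌋₊ t := by
    intro ω hω
    rw [Set.mem_ofPred_eq, hΔ, hρ, ncard_setOf_isWeakRecord,
      ← Nat.floor_lt (by positivity)] at hω
    exact Set.mem_iUnion.2 (exists_nthRecordBelow_of_lt_card_records hω)
  calc ℙ {ω | x < (Δ (ρ m ω) ω : ℝ)}
      ≤ μ (⋃ t, nthRecordBelow m ⌊x⌋₊ t) := (measure_mono hevent).trans_eq <|
        hindep.measure_preimage_eq_infinitePi hmeas hdist <|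
          .iUnion fun t => cylinderEvents_le_pi _ (measurableSet_nthRecordBelow _ _ t)
    _ ≤ μ (ladderHeightAtLeast m)ᶜ ^ ⌊x⌋₊ := measure_iUnion_nthRecordBelow_le ν m _
    _ ≤ ENNReal.ofReal (1 - K₁ * (m : ℝ) ^ ((1 : ℝ) - α)) ^ ⌊x⌋₊ := by
        rw [prob_compl_eq_one_sub (measurableSet_ladderHeightAtLeast m),
          ENNReal.ofReal_sub _ (by positivity), ENNReal.ofReal_one]
        gcongr
    _ ≤ ENNReal.ofReal (Real.exp (-K₁ * y / 2)) :=
        ofReal_one_sub_pow_floor_le_exp hα₁.le (by exact_mod_cast hm) hy hK₁.le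
          (by simpa using hladder_m.trans prob_le_one)

/-- Assume `ℙ(S_{τ₁} ≥ m) ≥ K₁ · m^{1-α}` for all `m ≥ 1`, where
`τ₁ = inf{k ≥ 1 : S_k ≥ 0}` and `K₁ ∈ (0,1]`. Then for every `m ≥ 1` and every real
`y ≥ 1`, `ℙ(Δ(ρ_m) > y · m^{α-1}) ≤ exp(-K₁ y / 2)`, where `ρ_m = inf{k ≥ 0 : S_k ≥ m}`
and `Δ(k)` counts the weak records of the walk up to time `k`. -/
theorem stmt_19
    (α : ℝ) (hα₁ : 1 < α) (hα₂ : α < 2)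
    (Ω : Type) [MeasureSpace Ω] [IsProbabilityMeasure (ℙ : Measure Ω)]
    (ν : Measure ℤ) [IsProbabilityMeasure ν]
    (hsupp : ν {k : ℤ | k < -1} = 0)
    (hint : Integrable (fun x : ℤ => (x : ℝ)) ν)
    (hmean : ∫ x : ℤ, (x : ℝ) ∂ν = 0)
    (C : ℝ) (hC : 0 < C)
    (htail : Tendsto (fun k : ℕ => (k : ℝ) ^ α * (ν {j : ℤ | (k : ℤ) ≤ j}).toReal)
      atTop (nhds C))
    (ξ : ℕ → Ω → ℤ) (hmeas : ∀ i, Measurable (ξ i))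
    (hindep : iIndepFun ξ ℙ)
    (hdist : ∀ i, Measure.map (ξ i) ℙ = ν)
    (S : ℕ → Ω → ℤ) (hS : ∀ n ω, S n ω = ∑ i ∈ Finset.range n, ξ i ω)
    (Δ : ℕ → Ω → ℕ)
    (hΔ : ∀ n ω, Δ n ω =
      Set.ncard {l : ℕ | 1 ≤ l ∧ l ≤ n ∧ ∀ m : ℕ, m ≤ l → S m ω ≤ S l ω})
    (τ : Ω → ℕ) (hτ : ∀ ω, τ ω = sInf {k : ℕ | 1 ≤ k ∧ 0 ≤ S k ω})
    (ρ : ℕ → Ω → ℕ) (hρ : ∀ m ω, ρ m ω = sInf {k : ℕ | (m : ℤ) ≤ S k ω})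
    (K₁ : ℝ) (hK₁ : 0 < K₁) (hK₁' : K₁ ≤ 1)
    (hladder : ∀ m : ℕ, 1 ≤ m →
      ENNReal.ofReal (K₁ * (m : ℝ) ^ ((1 : ℝ) - α)) ≤ ℙ {ω | (m : ℤ) ≤ S (τ ω) ω}) :
    ∀ m : ℕ, 1 ≤ m → ∀ y : ℝ, 1 ≤ y →
      ℙ {ω | y * (m : ℝ) ^ (α - 1) < (Δ (ρ m ω) ω : ℝ)} ≤
        ENNReal.ofReal (Real.exp (-K₁ * y / 2)) :=
  stmt_19_general α hα₁ Ω ν ξ hmeas hindep hdist S hS Δ hΔ τ hτ ρ hρ K₁ hK₁ hladder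
end
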